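/- arXiv:1512.09258 — 5 statements merged into one kernel-verified Lean document; each statement's English description precedes it below -/
import Mathlib

section
/- Sylvester–Jacobi–Gundelfinger–Frobenius theorem: for a regular real symmetric n×n matrix S (all principal leading minors μ_k(S) nonzero, with μ_0 = 1), the signature of S equals the sum over k = 1,…,n of sign(μ_k(S)/μ_{k−1}(S)), which equals n − 2·var(μ_0, μ_1, …, μ_n), the number of sign changes in the minor sequence. -/
open Matrix

/-- The signature of a real symmetric (hermitian) matrix: number of positive eigenvalues
minus number of negative eigenvalues. -/
noncomputable def matrixSignature {ι : Type} [Fintype ι] [DecidableEq ι]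
    (S : Matrix ι ι ℝ) : ℤ :=
  if h : S.IsHermitian then
    ((Finset.univ.filter fun i => 0 < h.eigenvalues i).card : ℤ)
      - ((Finset.univ.filter fun i => h.eigenvalues i < 0).card : ℤ)
  else 0

/-- The `k`-th leading principal minor of an `n × n` matrix (for `k ≤ n`), with the
convention that the `0`-th minor is `1`. -/
noncomputable def leadingMinor {n : ℕ} (S : Matrix (Fin n) (Fin n) ℝ) (k : ℕ) : ℝ :=
  Matrix.det (Matrix.of fun i j : Fin k =>
    if h : (i : ℕ) < n ∧ (j : ℕ) < n then S ⟨i, h.1⟩ ⟨j, h.2⟩ else 0)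

/-!
Completing squares block by block: if the leading `k × k` block `A` of a symmetric matrix is
invertible, the Schur complement of `A` in the leading `(k + 1) × (k + 1)` block is the scalar
`μₖ₊₁ / μₖ`, so a regular `S` is congruent to `diagonal (μₖ₊₁ / μₖ)`. By the spectral theorem `S`
is also congruent to the diagonal of its eigenvalues, and Sylvester's law of inertia says that two
congruent real diagonal matrices have equally many positive and equally many negative entries.
Finally `μₖ₊₁ / μₖ < 0` exactly when the sequence of minors changes sign at `k`.
-/

open Finset

namespace Matrix

variable {ι κ : Type*} [Fintype ι] [Fintype κ] [DecidableEq ι] [DecidableEq κ]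

theorem dotProduct_diagonal_mulVec_self {R : Type*} [CommSemiring R] (d y : ι → R) :
    y ⬝ᵥ (diagonal d *ᵥ y) = ∑ i, d i * y i ^ 2 := by
  simp only [dotProduct, mulVec_diagonal]
  exact sum_congr rfl fun i _ => by ring

theorem card_pos_le_of_diagonal_eq {d : ι → ℝ} {d' : κ → ℝ} {B : Matrix ι κ ℝ}
    (h : diagonal d' = Bᵀ * diagonal d * B) :
    #{k | 0 < d' k} ≤ #{i | 0 < d i} := by
  by_contra! hlt
  -- A nonzero `y` supported where `d' > 0` with `B y = 0` wherever `d > 0` makes the two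
  -- quadratic forms disagree in sign; it exists by counting dimensions.
  let extend := Function.ExtendByZero.linearMap ℝ (Subtype.val : {k // 0 < d' k} → κ)
  let L := LinearMap.funLeft ℝ ℝ (Subtype.val : {i // 0 < d i} → ι) ∘ₗ B.mulVecLin ∘ₗ extend
  obtain ⟨z, hz, hz0⟩ := Submodule.exists_mem_ne_zero_of_ne_bot <|
    LinearMap.ker_ne_bot_of_finrank_lt (f := L) (by simpa [Fintype.card_subtype] using hlt)
  set y := extend z
  have hy : ∀ k : {k // 0 < d' k}, y k = z k := fun k =>
    Subtype.val_injective.extend_apply _ _ k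
  have hy0 : ∀ k, ¬ 0 < d' k → y k = 0 := fun k hk =>
    Function.extend_apply' _ _ _ fun ⟨k', hk'⟩ => hk (hk' ▸ k'.2)
  have hBy : ∀ i, 0 < d i → (B *ᵥ y) i = 0 := fun i hi => congrFun hz ⟨i, hi⟩
  have hquad : ∑ k, d' k * y k ^ 2 = ∑ i, d i * (B *ᵥ y) i ^ 2 := by
    rw [← dotProduct_diagonal_mulVec_self, ← dotProduct_diagonal_mulVec_self, h,
      ← mulVec_mulVec, ← mulVec_mulVec, dotProduct_mulVec, vecMul_transpose]
  obtain ⟨k₀, hk₀⟩ : ∃ k, z k ≠ 0 := Function.ne_iff.mp hz0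
  have hpos : 0 < ∑ k, d' k * y k ^ 2 := by
    refine sum_pos' (fun k _ => ?_) ⟨k₀, mem_univ _, ?_⟩
    · by_cases hk : 0 < d' k
      · positivity
      · simp [hy0 k hk]
    · rw [hy k₀]
      have := k₀.2
      positivity
  have hnonpos : ∑ i, d i * (B *ᵥ y) i ^ 2 ≤ 0 := by
    refine sum_nonpos fun i _ => ?_
    by_cases hi : 0 < d i
    · simp [hBy i hi]
    · exact mul_nonpos_of_nonpos_of_nonneg (not_lt.mp hi) (sq_nonneg _)
  linarith

section IsCongrDiagonal

variable {R : Type*} [CommRing R]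

def IsCongrDiagonal (S : Matrix ι ι R) (d : ι → R) : Prop :=
  ∃ B : Matrix ι ι R, IsUnit B ∧ S = Bᵀ * diagonal d * B

theorem isCongrDiagonal_diagonal (d : ι → R) : IsCongrDiagonal (diagonal d) d :=
  ⟨1, isUnit_one, by simp⟩

theorem isCongrDiagonal_det_of_unique [Unique ι] (M : Matrix ι ι R) :
    IsCongrDiagonal M fun _ => M.det := by
  convert isCongrDiagonal_diagonal (fun _ : ι => M.det) using 1
  ext i j
  simp [det_unique, Subsingleton.elim i default, Subsingleton.elim j default]

theorem IsCongrDiagonal.isSymm {S : Matrix ι ι R} {d : ι → R} (h : IsCongrDiagonal S d) :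
    S.IsSymm := by
  obtain ⟨B, -, rfl⟩ := h
  simp only [IsSymm, transpose_mul, transpose_transpose, (isSymm_diagonal d).eq, Matrix.mul_assoc]

theorem IsCongrDiagonal.transpose_mul_mul {S : Matrix ι ι R} {d : ι → R}
    (h : IsCongrDiagonal S d) {E : Matrix ι ι R} (hE : IsUnit E) :
    IsCongrDiagonal (Eᵀ * S * E) d := by
  obtain ⟨B, hB, rfl⟩ := h
  exact ⟨B * E, hB.mul hE, by simp only [transpose_mul, Matrix.mul_assoc]⟩

theorem IsCongrDiagonal.exists_diagonal_eq {S : Matrix ι ι R} {d : ι → R}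
    (h : IsCongrDiagonal S d) : ∃ C : Matrix ι ι R, diagonal d = Cᵀ * S * C := by
  obtain ⟨B, ⟨u, rfl⟩, rfl⟩ := h
  refine ⟨↑u⁻¹, ?_⟩
  simp [← Matrix.mul_assoc, ← transpose_mul]

theorem IsCongrDiagonal.neg {S : Matrix ι ι R} {d : ι → R} (h : IsCongrDiagonal S d) :
    IsCongrDiagonal (-S) (-d) := by
  obtain ⟨B, hB, rfl⟩ := h
  exact ⟨B, hB, by rw [Pi.neg_def, ← diagonal_neg, Matrix.mul_neg, Matrix.neg_mul]⟩

theorem IsCongrDiagonal.submatrix {S : Matrix ι ι R} {d : ι → R} (h : IsCongrDiagonal S d)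
    (e : κ ≃ ι) : IsCongrDiagonal (S.submatrix e e) (d ∘ e) := by
  obtain ⟨B, hB, rfl⟩ := h
  refine ⟨B.submatrix e e, (isUnit_submatrix_equiv e e).mpr hB, ?_⟩
  rw [← submatrix_diagonal_equiv, transpose_submatrix, submatrix_mul_equiv, submatrix_mul_equiv]

theorem isCongrDiagonal_submatrix_equiv_iff {S : Matrix ι ι R} {d : ι → R} (e : κ ≃ ι) :
    IsCongrDiagonal (S.submatrix e e) (d ∘ e) ↔ IsCongrDiagonal S d :=
  ⟨fun h => by simpa [Function.comp_assoc] using h.submatrix e.symm, fun h => h.submatrix e⟩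

theorem IsCongrDiagonal.fromBlocks {A : Matrix ι ι R} {D : Matrix κ κ R} {d₁ : ι → R}
    {d₂ : κ → R} (hA : IsCongrDiagonal A d₁) (hD : IsCongrDiagonal D d₂) :
    IsCongrDiagonal (fromBlocks A 0 0 D) (Sum.elim d₁ d₂) := by
  obtain ⟨B, hB, rfl⟩ := hA
  obtain ⟨C, hC, rfl⟩ := hD
  refine ⟨Matrix.fromBlocks B 0 0 C, ?_, ?_⟩
  · rw [isUnit_iff_isUnit_det] at hB hC ⊢
    rw [det_fromBlocks_zero₂₁]
    exact hB.mul hC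
  · rw [← fromBlocks_diagonal, fromBlocks_transpose, fromBlocks_multiply, fromBlocks_multiply]
    simp

theorem IsCongrDiagonal.fromBlocks_of_schur {A : Matrix ι ι R} [Invertible A] {B : Matrix ι κ R}
    {D : Matrix κ κ R} {d₁ : ι → R} {d₂ : κ → R} (hA : IsCongrDiagonal A d₁)
    (hD : IsCongrDiagonal (D - Bᵀ * ⅟A * B) d₂) :
    IsCongrDiagonal (Matrix.fromBlocks A B Bᵀ D) (Sum.elim d₁ d₂) := by
  set E := Matrix.fromBlocks (1 : Matrix ι ι R) (⅟A * B) 0 (1 : Matrix κ κ R)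
  have hE : IsUnit E := by simp [E, isUnit_iff_isUnit_det]
  have hEt : Matrix.fromBlocks (1 : Matrix ι ι R) 0 (Bᵀ * ⅟A) (1 : Matrix κ κ R) = Eᵀ := by
    have hAinv : A⁻¹ᵀ = A⁻¹ := by rw [transpose_nonsing_inv, hA.isSymm.eq]
    simp [E, fromBlocks_transpose, hAinv]
  rw [fromBlocks_eq_of_invertible₁₁, hEt]
  exact (hA.fromBlocks hD).transpose_mul_mul hE

theorem IsCongrDiagonal.of_submatrix_castSucc {K : Type*} [Field K] {n : ℕ}
    {S : Matrix (Fin (n + 1)) (Fin (n + 1)) K} (hS : S.IsSymm) {d : Fin n → K}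
    (hA : (S.submatrix Fin.castSucc Fin.castSucc).IsCongrDiagonal d)
    (hAdet : (S.submatrix Fin.castSucc Fin.castSucc).det ≠ 0) :
    S.IsCongrDiagonal (Fin.snoc d (S.det / (S.submatrix Fin.castSucc Fin.castSucc).det)) := by
  set A := S.submatrix Fin.castSucc Fin.castSucc
  have : Invertible A := A.invertibleOfIsUnitDet hAdet.isUnit
  let e : Fin n ⊕ Fin 1 ≃ Fin (n + 1) := finSumFinEquiv
  set T := S.submatrix e e
  have hT : T = Matrix.fromBlocks A T.toBlocks₁₂ T.toBlocks₁₂ᵀ T.toBlocks₂₂ := by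
    have hTsymm : T.IsSymm := hS.submatrix e
    rw [← fromBlocks_toBlocks T, isSymm_fromBlocks_iff] at hTsymm
    conv_lhs => rw [← fromBlocks_toBlocks T, ← hTsymm.2.1]
    rfl
  set schur := T.toBlocks₂₂ - T.toBlocks₁₂ᵀ * ⅟A * T.toBlocks₁₂
  have hschur : schur.det = S.det / A.det := by
    have hdet : S.det = A.det * schur.det := by
      rw [← det_submatrix_equiv_self e S, ← det_fromBlocks₁₁, ← hT]
    rw [hdet]
    field_simp
  rw [← isCongrDiagonal_submatrix_equiv_iff e]
  change T.IsCongrDiagonal _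
  rw [hT]
  convert hA.fromBlocks_of_schur (isCongrDiagonal_det_of_unique schur) using 1
  funext x
  rcases x with k | k
  · exact Fin.snoc_castSucc (α := fun _ => K) ..
  · rw [Fin.fin_one_eq_zero k, Sum.elim_inr, hschur]
    exact Fin.snoc_last (α := fun _ => K) ..

end IsCongrDiagonal

theorem IsCongrDiagonal.card_pos_le {S : Matrix ι ι ℝ} {d d' : ι → ℝ}
    (h : IsCongrDiagonal S d) (h' : IsCongrDiagonal S d') : #{i | 0 < d' i} ≤ #{i | 0 < d i} := by
  obtain ⟨B, -, rfl⟩ := h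
  obtain ⟨C, hC⟩ := h'.exists_diagonal_eq
  exact card_pos_le_of_diagonal_eq (B := B * C) <| by
    rw [hC, transpose_mul]; simp only [Matrix.mul_assoc]

theorem IsCongrDiagonal.card_pos_eq {S : Matrix ι ι ℝ} {d d' : ι → ℝ}
    (h : IsCongrDiagonal S d) (h' : IsCongrDiagonal S d') : #{i | 0 < d i} = #{i | 0 < d' i} :=
  le_antisymm (h'.card_pos_le h) (h.card_pos_le h')

theorem IsCongrDiagonal.card_neg_eq {S : Matrix ι ι ℝ} {d d' : ι → ℝ}
    (h : IsCongrDiagonal S d) (h' : IsCongrDiagonal S d') : #{i | d i < 0} = #{i | d' i < 0} := by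
  simpa only [Pi.neg_apply, neg_pos] using h.neg.card_pos_eq h'.neg

theorem IsHermitian.isCongrDiagonal_eigenvalues {S : Matrix ι ι ℝ} (hS : S.IsHermitian) :
    IsCongrDiagonal S hS.eigenvalues := by
  set U : Matrix ι ι ℝ := (hS.eigenvectorUnitary : Matrix ι ι ℝ)
  refine ⟨Uᵀ, U.isUnit_transpose.mpr Unitary.isUnit_coe, ?_⟩
  conv_lhs => rw [hS.spectral_theorem]
  simp [U, Unitary.conjStarAlgAut_apply, RCLike.ofReal_real_eq_id, star_eq_conjTranspose]

end Matrix

theorem Matrix.IsCongrDiagonal.matrixSignature_eq {ι : Type} [Fintype ι] [DecidableEq ι]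
    {S : Matrix ι ι ℝ} {d : ι → ℝ} (h : S.IsCongrDiagonal d) :
    matrixSignature S = #{i | 0 < d i} - #{i | d i < 0} := by
  have hS : S.IsHermitian := isHermitian_iff_isSymm.mpr h.isSymm
  rw [matrixSignature, dif_pos hS, hS.isCongrDiagonal_eigenvalues.card_pos_eq h,
    hS.isCongrDiagonal_eigenvalues.card_neg_eq h]

theorem leadingMinor_self {n : ℕ} (S : Matrix (Fin n) (Fin n) ℝ) : leadingMinor S n = S.det := by
  unfold leadingMinor
  congr 1
  ext i j
  simp

theorem leadingMinor_submatrix_castSucc {n k : ℕ} (S : Matrix (Fin (n + 1)) (Fin (n + 1)) ℝ)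
    (hk : k ≤ n) : leadingMinor (S.submatrix Fin.castSucc Fin.castSucc) k = leadingMinor S k := by
  unfold leadingMinor
  congr 1
  ext i j
  have hi : (i : ℕ) < n := i.2.trans_le hk
  have hj : (j : ℕ) < n := j.2.trans_le hk
  simp only [of_apply, dif_pos (And.intro hi hj),
    dif_pos (And.intro (hi.trans n.lt_succ_self) (hj.trans n.lt_succ_self))]
  rfl

theorem isCongrDiagonal_leadingMinor_div {n : ℕ} {S : Matrix (Fin n) (Fin n) ℝ} (hS : S.IsSymm)
    (hreg : ∀ k < n, leadingMinor S k ≠ 0) :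
    S.IsCongrDiagonal fun k => leadingMinor S (k + 1) / leadingMinor S k := by
  induction n with
  | zero => exact ⟨1, isUnit_one, Subsingleton.elim _ _⟩
  | succ n ih =>
    set A := S.submatrix Fin.castSucc Fin.castSucc
    have hμA : ∀ k ≤ n, leadingMinor A k = leadingMinor S k := fun k hk =>
      leadingMinor_submatrix_castSucc S hk
    have hAdet : A.det = leadingMinor S n := by rw [← leadingMinor_self, hμA n le_rfl]
    have hA := ih (hS.submatrix _) fun k hk => hμA k hk.le ▸ hreg k (hk.trans n.lt_succ_self)
    have hd : (fun k : Fin (n + 1) => leadingMinor S (k + 1) / leadingMinor S k) =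
        Fin.snoc (fun k : Fin n => leadingMinor A (k + 1) / leadingMinor A k) (S.det / A.det) := by
      funext k
      induction k using Fin.lastCases with
      | last => simp [hAdet, leadingMinor_self]
      | cast k => simp [hμA _ k.2, hμA _ k.2.le]
    rw [hd]
    exact hA.of_submatrix_castSucc hS (hAdet ▸ hreg n n.lt_succ_self)

theorem Finset.sum_sign_eq_card_pos_sub_card_neg {α : Type*} (s : Finset α) (f : α → ℝ) :
    ∑ a ∈ s, Real.sign (f a) = (#{a ∈ s | 0 < f a} : ℝ) - #{a ∈ s | f a < 0} := by
  have hsign : ∀ x : ℝ, Real.sign x = (if 0 < x then 1 else 0) - (if x < 0 then 1 else 0) := by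
    intro x
    rcases lt_trichotomy x 0 with hx | rfl | hx
    · simp [Real.sign_of_neg hx, hx, hx.not_gt]
    · simp
    · simp [Real.sign_of_pos hx, hx, hx.not_gt]
  simp only [hsign, sum_sub_distrib, sum_boole]

theorem Finset.card_filter_pos_add_card_filter_neg {α : Type*} {s : Finset α} {f : α → ℝ}
    (hf : ∀ a ∈ s, f a ≠ 0) : #{a ∈ s | 0 < f a} + #{a ∈ s | f a < 0} = #s := by
  rw [← card_filter_add_card_filter_not (s := s) (fun a => 0 < f a)]
  congr 2
  exact filter_congr fun a ha => by rw [not_lt, (hf a ha).le_iff_lt]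

theorem Fin.card_filter_univ_eq_card_filter_range {n : ℕ} (p : ℕ → Prop) [DecidablePred p] :
    #{k : Fin n | p k} = #{k ∈ range n | p k} := by
  simp only [card_filter]
  exact Fin.sum_univ_eq_sum_range (fun k => if p k then 1 else 0) n

/-- Sylvester–Jacobi–Gundelfinger–Frobenius: for a regular real symmetric `n × n` matrix `S`
(all leading principal minors nonzero), the signature equals
`∑ₖ sign(μₖ₊₁/μₖ) = n − 2·var(μ₀,…,μₙ)`. -/
theorem sylvester_jacobi_gundelfinger_frobenius (n : ℕ) (S : Matrix (Fin n) (Fin n) ℝ)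
    (hS : S.IsSymm) (hreg : ∀ k ≤ n, leadingMinor S k ≠ 0) :
    (matrixSignature S : ℝ) =
      ∑ k ∈ Finset.range n, Real.sign (leadingMinor S (k + 1) / leadingMinor S k) ∧
    matrixSignature S =
      (n : ℤ) - 2 * ((Finset.range n).filter fun k =>
        leadingMinor S k * leadingMinor S (k + 1) < 0).card := by
  set f : ℕ → ℝ := fun k => leadingMinor S (k + 1) / leadingMinor S k
  have hf : ∀ k ∈ range n, f k ≠ 0 := fun k hk =>
    div_ne_zero (hreg _ (mem_range.mp hk)) (hreg _ (mem_range.mp hk).le)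
  have hsig : matrixSignature S = #{k ∈ range n | 0 < f k} - #{k ∈ range n | f k < 0} := by
    rw [(isCongrDiagonal_leadingMinor_div hS fun k hk => hreg k hk.le).matrixSignature_eq,
      Fin.card_filter_univ_eq_card_filter_range (fun k => 0 < f k),
      Fin.card_filter_univ_eq_card_filter_range (fun k => f k < 0)]
  have hvar : {k ∈ range n | leadingMinor S k * leadingMinor S (k + 1) < 0} =
      {k ∈ range n | f k < 0} :=
    filter_congr fun k _ => by rw [div_neg_iff, mul_comm, mul_neg_iff]
  constructor
  · rw [hsig]
    exact_mod_cast (sum_sign_eq_card_pos_sub_card_neg (range n) f).symm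
  · have hcard := card_filter_pos_add_card_filter_neg hf
    rw [card_range] at hcard
    rw [hsig, hvar]
    omega
end

section
/- Sturm's theorem: let P ∈ ℝ[X] be a regular polynomial of degree n with Sturm sequence P_0 = P, P_1 = P′, P_{k+1} = P_k Q_k − P_{k−1}, P_n a nonzero constant. Then for regular real numbers a < b (i.e. no P_k vanishes at a or b), the number of real roots of P in [a, b] equals var(a) − var(b), where var(x) is the number of sign changes in the sequence P_0(x), P_1(x), …, P_n(x). -/
/-!
The count `var` can only change at a root of some `P_k`, so cut `[a, b]` at regular points into
pieces each containing a single such root `c`; all other `P_j` keep their sign on the piece.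
If `P_k(c) = 0` with `0 < k < n`, the recurrence gives `P_{k+1}(c) = -P_{k-1}(c)`, so at both ends
exactly one of the pairs `(P_{k-1}, P_k)`, `(P_k, P_{k+1})` changes sign and `var` is unchanged.
If `P(c) = 0`, then `P' = P_1` has constant sign, so `P` is strictly monotone through `c` and
`P P'` is negative before `c` and positive after it: `var` drops by exactly one.
-/

open Polynomial Set

theorem IsPreconnected.mul_pos_of_forall_ne_zero {α 𝕜 : Type*} [TopologicalSpace α]
    [Field 𝕜] [LinearOrder 𝕜] [IsStrictOrderedRing 𝕜] [TopologicalSpace 𝕜]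
    [OrderClosedTopology 𝕜] {S : Set α} {f : α → 𝕜} (hS : IsPreconnected S)
    (hf : ContinuousOn f S) (h0 : ∀ x ∈ S, f x ≠ 0) {x y : α} (hx : x ∈ S) (hy : y ∈ S) :
    0 < f x * f y := by
  have hzero : (0 : 𝕜) ∉ f '' S := fun ⟨z, hz, hfz⟩ => h0 z hz hfz
  rcases (h0 x hx).lt_or_gt with hfx | hfx <;> rcases (h0 y hy).lt_or_gt with hfy | hfy
  · exact mul_pos_of_neg_of_neg hfx hfy
  · exact absurd (hS.intermediate_value hx hy hf ⟨hfx.le, hfy.le⟩) hzero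
  · exact absurd (hS.intermediate_value hy hx hf ⟨hfy.le, hfx.le⟩) hzero
  · exact mul_pos hfx hfy

theorem Polynomial.eval_sub_mul_eval_derivative_pos {p : ℝ[X]} {a b x y z : ℝ}
    (hd : ∀ w ∈ Icc a b, p.derivative.eval w ≠ 0) (hx : x ∈ Icc a b) (hy : y ∈ Icc a b)
    (hxy : x < y) (hz : z ∈ Icc a b) : 0 < (p.eval y - p.eval x) * p.derivative.eval z := by
  obtain ⟨ξ, hξ, hslope⟩ := exists_hasDerivAt_eq_slope (fun t => p.eval t)
    (fun t => p.derivative.eval t) hxy p.continuousOn (fun t _ => p.hasDerivAt t)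
  have hξ' : ξ ∈ Icc a b := ⟨hx.1.trans hξ.1.le, hξ.2.le.trans hy.2⟩
  have hsign := isPreconnected_Icc.mul_pos_of_forall_ne_zero p.derivative.continuousOn hd hξ' hz
  rw [eq_div_iff (sub_pos.2 hxy).ne'] at hslope
  calc 0 < p.derivative.eval ξ * p.derivative.eval z * (y - x) := mul_pos hsign (sub_pos.2 hxy)
    _ = (p.eval y - p.eval x) * p.derivative.eval z := by rw [← hslope]; ring

section SignLemmas

variable {R : Type*} [CommRing R] [LinearOrder R] [IsStrictOrderedRing R]

theorem mul_neg_iff_of_mul_pos {u v u' v' : R} (hu : 0 < u * u') (hv : 0 < v * v') :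
    u * v < 0 ↔ u' * v' < 0 := by
  constructor <;> intro h <;> nlinarith [mul_pos hu hv]

theorem mul_neg_iff_not_mul_neg {u v w : R} (huw : u * w < 0) (hv : v ≠ 0) :
    u * v < 0 ↔ ¬ v * w < 0 := by
  have hv2 : 0 < v * v := mul_self_pos.2 hv
  constructor
  · intro h1 h2
    nlinarith [mul_pos_of_neg_of_neg h1 h2]
  · intro h2
    nlinarith [mul_neg_of_pos_of_neg hv2 huw, not_lt.1 h2]

end SignLemmas

noncomputable def signChanges (Ps : ℕ → ℝ[X]) (s : Finset ℕ) (x : ℝ) : ℕ :=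
  (s.filter fun k => (Ps k).eval x * (Ps (k + 1)).eval x < 0).card

noncomputable def rootsIcc (p : ℝ[X]) (a b : ℝ) : Finset ℝ :=
  p.roots.toFinset.filter fun x => a ≤ x ∧ x ≤ b

theorem rootsIcc_eq_empty {p : ℝ[X]} {a b : ℝ} (h : ∀ x ∈ Icc a b, p.eval x ≠ 0) :
    rootsIcc p a b = ∅ :=
  Finset.filter_eq_empty_iff.2 fun x hx hxab =>
    h x hxab (isRoot_of_mem_roots (Multiset.mem_toFinset.1 hx))

theorem card_rootsIcc_eq_add {p : ℝ[X]} {a m b : ℝ} (hm : m ∈ Icc a b)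
    (hpm : p.eval m ≠ 0) :
    (rootsIcc p a b).card = (rootsIcc p a m).card + (rootsIcc p m b).card := by
  rw [← Finset.card_union_of_disjoint]
  · congr 1
    ext x
    simp only [rootsIcc, Finset.mem_union, Finset.mem_filter]
    constructor
    · rintro ⟨hx, hax, hxb⟩
      rcases le_total x m with hxm | hmx
      exacts [Or.inl ⟨hx, hax, hxm⟩, Or.inr ⟨hx, hmx, hxb⟩]
    · rintro (⟨hx, hax, hxm⟩ | ⟨hx, hmx, hxb⟩)
      exacts [⟨hx, hax, hxm.trans hm.2⟩, ⟨hx, hm.1.trans hmx, hxb⟩]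
  · refine Finset.disjoint_left.2 fun x hx hx' => hpm ?_
    simp only [rootsIcc, Finset.mem_filter, Multiset.mem_toFinset] at hx hx'
    exact le_antisymm hx.2.2 hx'.2.1 ▸ isRoot_of_mem_roots hx.1

section SturmSequence

variable {Ps Q : ℕ → ℝ[X]} {n : ℕ} {a b c : ℝ}

theorem signChanges_sdiff_add {s T : Finset ℕ} (hT : T ⊆ s) (x : ℝ) :
    signChanges Ps (s \ T) x + signChanges Ps T x = signChanges Ps s x := by
  rw [signChanges, signChanges, ← Finset.card_union_of_disjoint
    (Finset.disjoint_filter_filter Finset.sdiff_disjoint), ← Finset.filter_union,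
    Finset.sdiff_union_of_subset hT, signChanges]

theorem signChanges_eq_of_forall_ne_zero {s : Finset ℕ}
    (h : ∀ k ∈ s, ∀ x ∈ Icc a b, (Ps k).eval x ≠ 0 ∧ (Ps (k + 1)).eval x ≠ 0)
    {x y : ℝ} (hx : x ∈ Icc a b) (hy : y ∈ Icc a b) :
    signChanges Ps s x = signChanges Ps s y := by
  refine congrArg Finset.card (Finset.filter_congr fun k hk => mul_neg_iff_of_mul_pos ?_ ?_)
  · exact isPreconnected_Icc.mul_pos_of_forall_ne_zero (Ps k).continuousOn
      (fun z hz => (h k hk z hz).1) hx hy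
  · exact isPreconnected_Icc.mul_pos_of_forall_ne_zero (Ps (k + 1)).continuousOn
      (fun z hz => (h k hk z hz).2) hx hy

theorem signChanges_pair_eq_one {j : ℕ} {x : ℝ}
    (hout : (Ps j).eval x * (Ps (j + 2)).eval x < 0) (hmid : (Ps (j + 1)).eval x ≠ 0) :
    signChanges Ps {j, j + 1} x = 1 := by
  have hxor := mul_neg_iff_not_mul_neg hout hmid
  rw [signChanges, Finset.filter_insert, Finset.filter_singleton]
  by_cases h : (Ps j).eval x * (Ps (j + 1)).eval x < 0
  · simp [h, hxor.1 h]
  · simp [h, not_not.1 (mt hxor.2 h)]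

theorem card_rootsIcc_add_signChanges_of_isRoot_zero (hP1 : Ps 1 = derivative (Ps 0))
    (hn : 0 < n) (hac : a < c) (hcb : c < b) (hc : (Ps 0).eval c = 0)
    (hroot : ∀ x ∈ Icc a b, x ≠ c → (Ps 0).eval x ≠ 0)
    (hother : ∀ k ≤ n, k ≠ 0 → ∀ x ∈ Icc a b, (Ps k).eval x ≠ 0) :
    (rootsIcc (Ps 0) a b).card + signChanges Ps (Finset.range n) b =
      signChanges Ps (Finset.range n) a := by
  have hab : a ≤ b := hac.le.trans hcb.le
  have hcI : c ∈ Icc a b := ⟨hac.le, hcb.le⟩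
  have hroots : rootsIcc (Ps 0) a b = {c} := by
    have hne : Ps 0 ≠ 0 := fun h => hroot a (left_mem_Icc.2 hab) hac.ne (by simp [h])
    ext x
    simp only [rootsIcc, Finset.mem_filter, Multiset.mem_toFinset, mem_roots hne, IsRoot.def,
      Finset.mem_singleton]
    constructor
    · rintro ⟨hx, hax, hxb⟩
      by_contra hxc
      exact hroot x ⟨hax, hxb⟩ hxc hx
    · rintro rfl
      exact ⟨hc, hcI⟩
  have hd : ∀ x ∈ Icc a b, (Ps 0).derivative.eval x ≠ 0 := hP1 ▸ hother 1 hn one_ne_zero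
  have hsa := (Ps 0).eval_sub_mul_eval_derivative_pos hd (left_mem_Icc.2 hab) hcI hac
    (left_mem_Icc.2 hab)
  have hsb := (Ps 0).eval_sub_mul_eval_derivative_pos hd hcI (right_mem_Icc.2 hab) hcb
    (right_mem_Icc.2 hab)
  rw [hc, ← hP1] at hsa hsb
  have hchange_a : (Ps 0).eval a * (Ps 1).eval a < 0 := by linarith
  have hchange_b : ¬ (Ps 0).eval b * (Ps 1).eval b < 0 := by linarith
  have h0 : {0} ⊆ Finset.range n := by simpa using hn
  have hrest : signChanges Ps (Finset.range n \ {0}) b = signChanges Ps (Finset.range n \ {0}) a :=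
    signChanges_eq_of_forall_ne_zero (fun k hk x hx => by
      simp only [Finset.mem_sdiff, Finset.mem_range, Finset.mem_singleton] at hk
      exact ⟨hother k hk.1.le hk.2 x hx, hother (k + 1) hk.1 k.succ_ne_zero x hx⟩)
      (right_mem_Icc.2 hab) (left_mem_Icc.2 hab)
  rw [hroots, ← signChanges_sdiff_add h0 a, ← signChanges_sdiff_add h0 b, hrest]
  simp [signChanges, Finset.filter_singleton, hchange_a, hchange_b, add_comm]

theorem signChanges_eq_of_isRoot_succ {q : ℝ[X]} {j : ℕ}
    (hrec : Ps (j + 2) = Ps (j + 1) * q - Ps j) (hjn : j + 1 < n) (hcI : c ∈ Icc a b)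
    (hc : (Ps (j + 1)).eval c = 0) (ha : (Ps (j + 1)).eval a ≠ 0) (hb : (Ps (j + 1)).eval b ≠ 0)
    (hother : ∀ k ≤ n, k ≠ j + 1 → ∀ x ∈ Icc a b, (Ps k).eval x ≠ 0) :
    signChanges Ps (Finset.range n) a = signChanges Ps (Finset.range n) b := by
  have hab : a ≤ b := hcI.1.trans hcI.2
  have hT : {j, j + 1} ⊆ Finset.range n := by
    intro k
    simp only [Finset.mem_insert, Finset.mem_singleton, Finset.mem_range]
    omega
  -- `P_{j+2}(c) = -P_j(c)`, and neither changes sign on `[a, b]`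
  have hout : ∀ x ∈ Icc a b, (Ps j).eval x * (Ps (j + 2)).eval x < 0 := by
    intro x hx
    have hj := isPreconnected_Icc.mul_pos_of_forall_ne_zero (Ps j).continuousOn
      (hother j (by omega) (by omega)) hx hcI
    have hj2 := isPreconnected_Icc.mul_pos_of_forall_ne_zero (Ps (j + 2)).continuousOn
      (hother (j + 2) (by omega) (by omega)) hx hcI
    have hcval : (Ps (j + 2)).eval c = -(Ps j).eval c := by simp [hrec, hc]
    rw [hcval] at hj2
    nlinarith [mul_pos hj hj2, sq_nonneg ((Ps j).eval c)]
  have hrest : signChanges Ps (Finset.range n \ {j, j + 1}) a =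
      signChanges Ps (Finset.range n \ {j, j + 1}) b :=
    signChanges_eq_of_forall_ne_zero (fun k hk x hx => by
      simp only [Finset.mem_sdiff, Finset.mem_range, Finset.mem_insert,
        Finset.mem_singleton] at hk
      exact ⟨hother k (by omega) (by omega) x hx, hother (k + 1) (by omega) (by omega) x hx⟩)
      (left_mem_Icc.2 hab) (right_mem_Icc.2 hab)
  rw [← signChanges_sdiff_add hT a, ← signChanges_sdiff_add hT b, hrest,
    signChanges_pair_eq_one (hout a (left_mem_Icc.2 hab)) ha,
    signChanges_pair_eq_one (hout b (right_mem_Icc.2 hab)) hb]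

theorem card_rootsIcc_add_signChanges_of_unique_root (hP1 : Ps 1 = derivative (Ps 0))
    (hrec : ∀ k, 1 ≤ k → k ≤ n → Ps (k + 1) = Ps k * Q k - Ps (k - 1))
    (hPn : (Ps n).natDegree = 0)
    (hdistinct : ∀ j k, j ≤ n → k ≤ n → j ≠ k →
      ∀ x : ℝ, (Ps j).eval x = 0 → (Ps k).eval x ≠ 0)
    (hac : a < c) (hcb : c < b) {k₀ : ℕ} (hk₀ : k₀ ≤ n)
    (hc : (Ps k₀).eval c = 0)
    (hreg : ∀ k ≤ n, ∀ x ∈ Icc a b, x ≠ c → (Ps k).eval x ≠ 0) :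
    (rootsIcc (Ps 0) a b).card + signChanges Ps (Finset.range n) b =
      signChanges Ps (Finset.range n) a := by
  have haI : a ∈ Icc a b := ⟨le_rfl, hac.le.trans hcb.le⟩
  have hbI : b ∈ Icc a b := ⟨hac.le.trans hcb.le, le_rfl⟩
  have hother : ∀ k ≤ n, k ≠ k₀ → ∀ x ∈ Icc a b, (Ps k).eval x ≠ 0 := by
    intro k hk hkk₀ x hx
    by_cases hxc : x = c
    · exact hxc ▸ hdistinct k₀ k hk₀ hk (Ne.symm hkk₀) c hc
    · exact hreg k hk x hx hxc
  have hk₀n : k₀ < n := by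
    refine lt_of_le_of_ne hk₀ fun hk₀n => ?_
    obtain ⟨r, hr⟩ := natDegree_eq_zero.1 (hk₀n ▸ hPn)
    exact hreg k₀ hk₀ a haI hac.ne (by rw [← hr] at hc ⊢; simpa using hc)
  rcases k₀ with _ | j
  · exact card_rootsIcc_add_signChanges_of_isRoot_zero hP1 hk₀n hac hcb hc (hreg 0 hk₀) hother
  · rw [rootsIcc_eq_empty (hother 0 n.zero_le j.succ_ne_zero.symm), Finset.card_empty, zero_add]
    exact (signChanges_eq_of_isRoot_succ (by simpa using hrec (j + 1) (by omega) hk₀) hk₀n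
      ⟨hac.le, hcb.le⟩ hc (hreg _ hk₀ a haI hac.ne) (hreg _ hk₀ b hbI hcb.ne') hother).symm

noncomputable def critIoo (Ps : ℕ → ℝ[X]) (n : ℕ) (a b : ℝ) : Finset ℝ :=
  ((Finset.range (n + 1)).biUnion fun k => (Ps k).roots.toFinset).filter fun z => a < z ∧ z < b

theorem mem_critIoo (hne : ∀ k ≤ n, Ps k ≠ 0) {z : ℝ} :
    z ∈ critIoo Ps n a b ↔ (∃ k ≤ n, (Ps k).eval z = 0) ∧ a < z ∧ z < b := by
  simp only [critIoo, Finset.mem_filter, Finset.mem_biUnion, Finset.mem_range, Nat.lt_succ_iff,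
    Multiset.mem_toFinset]
  exact and_congr_left' (exists_congr fun k => and_congr_right fun hk => mem_roots (hne k hk))

theorem exists_mem_Ioo_forall_eval_ne_zero (hne : ∀ k ≤ n, Ps k ≠ 0) {c d : ℝ}
    (hcd : c < d) :
    ∃ m ∈ Ioo c d, ∀ k ≤ n, (Ps k).eval m ≠ 0 := by
  have hfin : {x | ∃ k ≤ n, (Ps k).IsRoot x}.Finite := by
    convert (Set.finite_le_nat n).biUnion fun k hk => finite_setOfPred_isRoot (hne k hk) using 1
    ext
    simp
  obtain ⟨m, hm, hroot⟩ := ((Ioo_infinite hcd).sdiff hfin).nonempty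
  exact ⟨m, hm, fun k hk h => hroot ⟨k, hk, h⟩⟩

theorem eval_ne_zero_of_notMem_critIoo (hne : ∀ k ≤ n, Ps k ≠ 0)
    (ha : ∀ k ≤ n, (Ps k).eval a ≠ 0) (hb : ∀ k ≤ n, (Ps k).eval b ≠ 0) {x : ℝ}
    (hx : x ∈ Icc a b) (hxc : x ∉ critIoo Ps n a b) : ∀ k ≤ n, (Ps k).eval x ≠ 0 := by
  intro k hk hroot
  rcases hx.1.eq_or_lt with rfl | hax
  · exact ha k hk hroot
  rcases hx.2.eq_or_lt with rfl | hxb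
  · exact hb k hk hroot
  exact hxc ((mem_critIoo hne).2 ⟨⟨k, hk, hroot⟩, hax, hxb⟩)

theorem critIoo_ssubset (hne : ∀ k ≤ n, Ps k ≠ 0) {m : ℝ} (hc : c ∈ critIoo Ps n a b)
    (hcm : c < m) : critIoo Ps n m b ⊂ critIoo Ps n a b := by
  have hac := ((mem_critIoo hne).1 hc).2.1
  refine (Finset.ssubset_iff_of_subset fun z hz => ?_).2
    ⟨c, hc, fun hc' => hcm.not_gt ((mem_critIoo hne).1 hc').2.1⟩
  obtain ⟨hroot, hmz, hzb⟩ := (mem_critIoo hne).1 hz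
  exact (mem_critIoo hne).2 ⟨hroot, (hac.trans hcm).trans hmz, hzb⟩

theorem card_rootsIcc_add_signChanges (hP1 : Ps 1 = derivative (Ps 0))
    (hrec : ∀ k, 1 ≤ k → k ≤ n → Ps (k + 1) = Ps k * Q k - Ps (k - 1))
    (hPn : (Ps n).natDegree = 0)
    (hdistinct : ∀ j k, j ≤ n → k ≤ n → j ≠ k →
      ∀ x : ℝ, (Ps j).eval x = 0 → (Ps k).eval x ≠ 0)
    (hab : a < b) (ha : ∀ k ≤ n, (Ps k).eval a ≠ 0) (hb : ∀ k ≤ n, (Ps k).eval b ≠ 0) :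
    (rootsIcc (Ps 0) a b).card + signChanges Ps (Finset.range n) b =
      signChanges Ps (Finset.range n) a := by
  have hne : ∀ k ≤ n, Ps k ≠ 0 := fun k hk h => ha k hk (by simp [h])
  induction hN : (critIoo Ps n a b).card using Nat.strong_induction_on generalizing a with
  | _ N ih =>
  rcases (critIoo Ps n a b).eq_empty_or_nonempty with hempty | hcrit
  · have hreg : ∀ x ∈ Icc a b, ∀ k ≤ n, (Ps k).eval x ≠ 0 := fun x hx =>
      eval_ne_zero_of_notMem_critIoo hne ha hb hx (hempty ▸ Finset.notMem_empty x)
    rw [rootsIcc_eq_empty fun x hx => hreg x hx 0 n.zero_le, Finset.card_empty, zero_add]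
    exact signChanges_eq_of_forall_ne_zero (fun k hk x hx =>
      ⟨hreg x hx k (Finset.mem_range.1 hk).le, hreg x hx (k + 1) (Finset.mem_range.1 hk)⟩)
      (right_mem_Icc.2 hab.le) (left_mem_Icc.2 hab.le)
  -- split `[a, b]` at a regular point `m` between the first critical point `c` and the next one
  set c := (critIoo Ps n a b).min' hcrit
  have hcmem : c ∈ critIoo Ps n a b := Finset.min'_mem _ _
  obtain ⟨⟨k₀, hk₀, hc⟩, hac, hcb⟩ := (mem_critIoo hne).1 hcmem
  set d := (insert b (critIoo Ps n c b)).min' (Finset.insert_nonempty _ _)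
  have hcd : c < d := by
    refine (Finset.lt_min'_iff _ _).2 fun y hy => ?_
    rcases Finset.mem_insert.1 hy with rfl | hy
    exacts [hcb, ((mem_critIoo hne).1 hy).2.1]
  obtain ⟨m, ⟨hcm, hmd⟩, hm⟩ := exists_mem_Ioo_forall_eval_ne_zero hne hcd
  have hmb : m < b := hmd.trans_le (Finset.min'_le _ _ (Finset.mem_insert_self _ _))
  have hleft : ∀ x ≠ c, x ∉ critIoo Ps n a m := fun x hxc hx => by
    obtain ⟨hroot, hax, hxm⟩ := (mem_critIoo hne).1 hx
    have hcx : c < x := (Finset.min'_le _ _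
      ((mem_critIoo hne).2 ⟨hroot, hax, hxm.trans hmb⟩)).lt_of_ne (Ne.symm hxc)
    have hdx : d ≤ x := Finset.min'_le _ _ (Finset.mem_insert_of_mem
      ((mem_critIoo hne).2 ⟨hroot, hcx, hxm.trans hmb⟩))
    linarith
  have hcount_left := card_rootsIcc_add_signChanges_of_unique_root hP1 hrec hPn hdistinct hac hcm
    hk₀ hc fun k hk x hx hxc => eval_ne_zero_of_notMem_critIoo hne ha hm hx (hleft x hxc) k hk
  have hcount_right := ih _ (hN ▸ Finset.card_lt_card (critIoo_ssubset hne hcmem hcm)) hmb hm rfl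
  rw [card_rootsIcc_eq_add ⟨(hac.trans hcm).le, hmb.le⟩ (hm 0 n.zero_le)]
  omega

end SturmSequence

theorem sturm_theorem_general (n : ℕ) (P : Polynomial ℝ) (Ps Q : ℕ → Polynomial ℝ)
    (hP0 : Ps 0 = P) (hP1 : Ps 1 = Polynomial.derivative P)
    (hrec : ∀ k, 1 ≤ k → k ≤ n → Ps (k + 1) = Ps k * Q k - Ps (k - 1))
    (hPnconst : (Ps n).natDegree = 0)
    -- regularity: the real roots of `P₀, …, P_n` are all distinct and nonzero
    (hdistinct : ∀ j k, j ≤ n → k ≤ n → j ≠ k →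
      ∀ x : ℝ, (Ps j).eval x = 0 → (Ps k).eval x ≠ 0)
    -- `a < b` are regular points
    (a b : ℝ) (hab : a < b)
    (ha : ∀ k ≤ n, (Ps k).eval a ≠ 0) (hb : ∀ k ≤ n, (Ps k).eval b ≠ 0) :
    ((P.roots.toFinset.filter fun x => a ≤ x ∧ x ≤ b).card : ℤ) =
      (((Finset.range n).filter fun k =>
          (Ps k).eval a * (Ps (k + 1)).eval a < 0).card : ℤ) -
      (((Finset.range n).filter fun k =>
          (Ps k).eval b * (Ps (k + 1)).eval b < 0).card : ℤ) := by
  subst hP0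
  have hcount := card_rootsIcc_add_signChanges hP1 hrec hPnconst hdistinct hab ha hb
  simp only [rootsIcc, signChanges] at hcount
  omega

/-- Sturm's theorem: for a regular degree-`n` polynomial `P` with Sturm sequence
`P₀ = P, P₁ = P', P_{k+1} = P_k Q_k − P_{k−1}` ending in a nonzero constant `P_n`,
and regular `a < b`, the number of real roots of `P` in `[a, b]` equals
`var(a) − var(b)`, where `var(x)` counts the sign changes in `(P₀(x), …, P_n(x))`. -/
theorem sturm_theorem (n : ℕ) (P : Polynomial ℝ) (Ps Q : ℕ → Polynomial ℝ)
    (hdeg : P.natDegree = n)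
    (hP0 : Ps 0 = P) (hP1 : Ps 1 = Polynomial.derivative P)
    (hrec : ∀ k, 1 ≤ k → k ≤ n → Ps (k + 1) = Ps k * Q k - Ps (k - 1))
    (hdegdec : ∀ k < n, (Ps (k + 1)).degree < (Ps k).degree)
    (hPnconst : (Ps n).natDegree = 0) (hPnne : Ps n ≠ 0) (hPn1 : Ps (n + 1) = 0)
    -- regularity: the real roots of `P₀, …, P_n` are all distinct and nonzero
    (hdistinct : ∀ j k, j ≤ n → k ≤ n → j ≠ k →
      ∀ x : ℝ, (Ps j).eval x = 0 → (Ps k).eval x ≠ 0)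
    (hnodup : ∀ k ≤ n, (Ps k).roots.Nodup)
    (hroots0 : ∀ k ≤ n, (Ps k).eval 0 ≠ 0)
    -- `a < b` are regular points
    (a b : ℝ) (hab : a < b)
    (ha : ∀ k ≤ n, (Ps k).eval a ≠ 0) (hb : ∀ k ≤ n, (Ps k).eval b ≠ 0) :
    ((P.roots.toFinset.filter fun x => a ≤ x ∧ x ≤ b).card : ℤ) =
      (((Finset.range n).filter fun k =>
          (Ps k).eval a * (Ps (k + 1)).eval a < 0).card : ℤ) -
      (((Finset.range n).filter fun k =>
          (Ps k).eval b * (Ps (k + 1)).eval b < 0).card : ℤ) :=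
  sturm_theorem_general n P Ps Q hP0 hP1 hrec hPnconst hdistinct a b hab ha hb
end

section
/- Jacobi–Hermite theorem: let P ∈ ℝ[X] be monic of degree n with n distinct complex roots. The number of real roots of P equals the signature of the n×n Hankel matrix S(P) with entries S(P)_{ij} = σ_{i+j−2}, where σ_k is the sum of k-th powers of all roots of P (equivalently σ_k = trace(C(P)^k) for the companion matrix C(P)). -/
open Matrix

/-- The companion matrix of a monic polynomial of degree `n`: ones on the subdiagonal and
the negated coefficients in the last column. -/
def companionMatrix (n : ℕ) (p : Polynomial ℝ) : Matrix (Fin n) (Fin n) ℝ :=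
  Matrix.of fun i j =>
    if (j : ℕ) = n - 1 then -p.coeff i
    else if (i : ℕ) = (j : ℕ) + 1 then 1 else 0

/-- The Jacobi–Hermite (Hankel) matrix `S(P)` with entries `σ_{i+j}` (0-indexed), where
`σ_k = trace(C(P)^k)` is the sum of `k`-th powers of the roots of `P`. -/
noncomputable def jacobiHermiteMatrix (n : ℕ) (p : Polynomial ℝ) : Matrix (Fin n) (Fin n) ℝ :=
  Matrix.of fun i j => Matrix.trace (companionMatrix n p ^ ((i : ℕ) + (j : ℕ)))


/-!
Enumerate the complex roots as `α : Fin n → ℂ` and let `V` be their Vandermonde matrix. Since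
`V C = diag(α) V` for the companion matrix `C`, the power sums are `σ_m = ∑ α_k ^ m`, so over `ℂ`
`S = Vᵀ V`, i.e. `xᵀ S x = ∑ p(α_k) ^ 2` with `p = ∑ x_i X ^ i`. A real root contributes the real
square `p(α_k) ^ 2`, and a pair `z, z̄` with `Im z > 0` contributes
`p(z) ^ 2 + p(z̄) ^ 2 = 2 (Re p(z)) ^ 2 - 2 (Im p(z)) ^ 2`. This writes `S = Mᵀ D M` with `M` real
(invertible, as `det S = det V ^ 2 ≠ 0`) and `D` diagonal with one positive entry per real root
and one entry of each sign per conjugate pair, and Sylvester's law of inertia concludes.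
-/

open Polynomial Finset ComplexConjugate

section Inertia

variable {ι : Type} [Fintype ι] [DecidableEq ι]

theorem dotProduct_transpose_mul_diagonal_mul_mulVec (M : Matrix ι ι ℝ) (d : ι → ℝ)
    (x : ι → ℝ) : x ⬝ᵥ (Mᵀ * diagonal d * M) *ᵥ x = ∑ i, d i * (M *ᵥ x) i ^ 2 := by
  rw [← mulVec_mulVec, ← mulVec_mulVec, dotProduct_mulVec, vecMul_transpose, dotProduct]
  simp only [mulVec_diagonal]
  exact sum_congr rfl fun i _ => by ring

theorem toQuadraticForm'_transpose_mul_diagonal_mul_equivalent (M : Matrix ι ι ℝ)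
    (hM : IsUnit M.det) (d : ι → ℝ) :
    (Mᵀ * diagonal d * M).toQuadraticForm'.Equivalent (QuadraticMap.weightedSumSquares ℝ d) := by
  let := M.invertibleOfIsUnitDet hM
  refine ⟨{ M.toLinearEquiv' this with map_app' := fun x => ?_ }⟩
  simp [Matrix.toQuadraticForm', toLinearMap₂'_apply',
    dotProduct_transpose_mul_diagonal_mul_mulVec, sq]

theorem sigPos_toQuadraticForm'_transpose_mul_diagonal_mul (M : Matrix ι ι ℝ)
    (hM : IsUnit M.det) (d : ι → ℝ) :
    sigPos (Mᵀ * diagonal d * M).toQuadraticForm' = #{i | 0 < d i} := by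
  rw [QuadraticForm.sigPos_of_equiv_weightedSumSquares
    (toQuadraticForm'_transpose_mul_diagonal_mul_equivalent M hM d), ← coe_filter_univ,
    Set.ncard_coe_finset]

theorem sigNeg_toQuadraticForm'_transpose_mul_diagonal_mul (M : Matrix ι ι ℝ)
    (hM : IsUnit M.det) (d : ι → ℝ) :
    sigNeg (Mᵀ * diagonal d * M).toQuadraticForm' = #{i | d i < 0} := by
  rw [QuadraticForm.sigNeg_of_equiv_weightedSumSquares
    (toQuadraticForm'_transpose_mul_diagonal_mul_equivalent M hM d), ← coe_filter_univ,
    Set.ncard_coe_finset]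

theorem Matrix.IsHermitian.exists_eq_transpose_mul_diagonal_eigenvalues_mul {S : Matrix ι ι ℝ}
    (hS : S.IsHermitian) :
    ∃ U : Matrix ι ι ℝ, IsUnit U.det ∧ S = Uᵀ * diagonal hS.eigenvalues * U := by
  refine ⟨(hS.eigenvectorUnitary : Matrix ι ι ℝ)ᵀ, by
    simpa using UnitaryGroup.det_isUnit hS.eigenvectorUnitary, ?_⟩
  conv_lhs => rw [hS.spectral_theorem]
  simp [RCLike.ofReal_real_eq_id, star_eq_conjTranspose, conjTranspose_eq_transpose_of_trivial]

theorem matrixSignature_transpose_mul_diagonal_mul (M : Matrix ι ι ℝ) (hM : IsUnit M.det)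
    (d : ι → ℝ) : matrixSignature (Mᵀ * diagonal d * M) = #{i | 0 < d i} - #{i | d i < 0} := by
  have hS : (Mᵀ * diagonal d * M).IsHermitian := by
    simp [IsHermitian, conjTranspose_eq_transpose_of_trivial, Matrix.mul_assoc]
  obtain ⟨U, hU, hSU⟩ := hS.exists_eq_transpose_mul_diagonal_eigenvalues_mul
  have hpos := sigPos_toQuadraticForm'_transpose_mul_diagonal_mul U hU hS.eigenvalues
  have hneg := sigNeg_toQuadraticForm'_transpose_mul_diagonal_mul U hU hS.eigenvalues
  rw [← hSU, sigPos_toQuadraticForm'_transpose_mul_diagonal_mul M hM] at hpos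
  rw [← hSU, sigNeg_toQuadraticForm'_transpose_mul_diagonal_mul M hM] at hneg
  rw [matrixSignature, dif_pos hS, ← hpos, ← hneg]

end Inertia

section PowerSums

variable {n : ℕ} {P : ℝ[X]}

theorem vandermonde_mul_companionMatrix (hm : P.Monic) (hdeg : P.natDegree = n)
    {α : Fin n → ℂ} (hα : ∀ k, aeval (α k) P = 0) :
    vandermonde α * (companionMatrix n P).map (algebraMap ℝ ℂ)
      = diagonal α * vandermonde α := by
  ext k j
  rw [mul_apply, diagonal_mul, vandermonde_apply]
  by_cases hj : (j : ℕ) = n - 1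
  · have hroot := hα k
    rw [aeval_eq_sum_range, hdeg, sum_range_succ, ← hdeg, hm.coeff_natDegree, hdeg, one_smul,
      add_eq_zero_iff_eq_neg'] at hroot
    have hj' : (j : ℕ) + 1 = n := by omega
    simp only [companionMatrix, map_apply, of_apply, hj, if_true, vandermonde_apply]
    rw [← pow_succ', ← hj, hj', hroot, ← Fin.sum_univ_eq_sum_range (fun i => P.coeff i • α k ^ i),
      ← sum_neg_distrib]
    refine sum_congr rfl fun i _ => ?_
    simp [Algebra.smul_def, mul_comm]
  · have hj' : (j : ℕ) + 1 < n := by omega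
    rw [sum_eq_single ⟨j + 1, hj'⟩]
    · simp [companionMatrix, hj, pow_succ', vandermonde_apply]
    · intro i _ hi
      have : (i : ℕ) ≠ j + 1 := fun h => hi (Fin.ext h)
      simp [companionMatrix, hj, this]
    · simp

theorem trace_companionMatrix_pow (hm : P.Monic) (hdeg : P.natDegree = n)
    {α : Fin n → ℂ} (hinj : Function.Injective α) (hα : ∀ k, aeval (α k) P = 0) (m : ℕ) :
    algebraMap ℝ ℂ (companionMatrix n P ^ m).trace = ∑ k, α k ^ m := by
  have hV : IsUnit (vandermonde α).det := (det_vandermonde_ne_zero_iff.mpr hinj).isUnit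
  have hconj : SemiconjBy (vandermonde α) _ _ := vandermonde_mul_companionMatrix hm hdeg hα
  replace hconj := hconj.pow_right m
  set C := (companionMatrix n P).map (algebraMap ℝ ℂ)
  calc algebraMap ℝ ℂ (companionMatrix n P ^ m).trace
      = (C ^ m).trace := by
        rw [AddMonoidHom.map_trace, ← RingHom.mapMatrix_apply, map_pow]; rfl
    _ = ((vandermonde α)⁻¹ * (diagonal α ^ m * vandermonde α)).trace := by
        rw [← hconj.eq]; exact congrArg trace (nonsing_inv_mul_cancel_left _ _ hV).symm
    _ = ∑ k, α k ^ m := by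
        rw [trace_mul_comm, Matrix.mul_assoc, mul_nonsing_inv _ hV, Matrix.mul_one, diagonal_pow,
          trace_diagonal]
        rfl

end PowerSums

/- Coordinates and weights of the real diagonalization of `∑ p(z) ^ 2` over a conjugation-stable
set of points: a real `z` gets `(Re p(z), 1)`, and of a pair `z, z̄` with `Im z > 0` the point `z`
gets `(Re p(z), 2)` and `z̄` gets `(Im p(z̄), -2)`. -/
noncomputable def conjWeight (z : ℂ) : ℝ := if z.im < 0 then -2 else if z.im = 0 then 1 else 2

noncomputable def conjCoord (z w : ℂ) : ℝ := if z.im < 0 then w.im else w.re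

theorem conjWeight_mul_conjCoord_add_conj {z : ℂ} (a b : ℂ)
    (hreal : z.im = 0 → a.im = 0 ∧ b.im = 0) :
    conjWeight z * conjCoord z a * conjCoord z b
      + conjWeight (conj z) * conjCoord (conj z) (conj a) * conjCoord (conj z) (conj b)
      = 2 * (a * b).re := by
  simp only [conjWeight, conjCoord, Complex.conj_im, Complex.conj_re, Complex.mul_re]
  split_ifs <;> grind

section ConjClosed

variable {ι : Type*} [Fintype ι] {α : ι → ℂ}

theorem sum_comp_conj_of_conj_mem_range (hinj : Function.Injective α)
    (hconj : ∀ k, ∃ l, α l = conj (α k)) {M : Type*} [AddCommMonoid M] (g : ℂ → M) :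
    ∑ k, g (conj (α k)) = ∑ k, g (α k) := by
  choose τ hτ using hconj
  have hτinj : Function.Injective τ := fun k l h => hinj <| by
    simpa using congrArg conj ((hτ k).symm.trans ((congrArg α h).trans (hτ l)))
  simp only [← hτ]
  exact (Finite.injective_iff_bijective.mp hτinj).sum_comp (g ∘ α)

theorem sum_conjWeight_mul_conjCoord_pow (hinj : Function.Injective α)
    (hconj : ∀ k, ∃ l, α l = conj (α k)) (i j : ℕ) :
    ∑ k, conjWeight (α k) * conjCoord (α k) (α k ^ i) * conjCoord (α k) (α k ^ j)
      = ∑ k, (α k ^ i * α k ^ j).re := by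
  have hsum := sum_comp_conj_of_conj_mem_range hinj hconj
    (fun z => conjWeight z * conjCoord z (z ^ i) * conjCoord z (z ^ j))
  have hpow_im {z : ℂ} (hz : z.im = 0) (m : ℕ) : (z ^ m).im = 0 := by
    rw [← Complex.conj_eq_iff_im, map_pow, Complex.conj_eq_iff_im.mpr hz]
  have hpair (k : ι) := conjWeight_mul_conjCoord_add_conj (z := α k) (α k ^ i) (α k ^ j)
    fun h => ⟨hpow_im h i, hpow_im h j⟩
  simp only [map_pow] at hsum hpair
  have hdouble : 2 * ∑ k, conjWeight (α k) * conjCoord (α k) (α k ^ i) * conjCoord (α k) (α k ^ j)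
      = 2 * ∑ k, (α k ^ i * α k ^ j).re := by
    rw [two_mul]
    nth_rw 2 [← hsum]
    rw [← sum_add_distrib, mul_sum]
    exact sum_congr rfl fun k _ => hpair k
  linarith

theorem card_conjWeight_pos_sub_card_conjWeight_neg (hinj : Function.Injective α)
    (hconj : ∀ k, ∃ l, α l = conj (α k)) :
    (#{k | 0 < conjWeight (α k)} : ℤ) - #{k | conjWeight (α k) < 0} = #{k | (α k).im = 0} := by
  classical
  have hsym : #{k | 0 < (α k).im} = #{k | (α k).im < 0} := by
    simp only [card_filter]
    rw [← sum_comp_conj_of_conj_mem_range hinj hconj (fun z => if 0 < z.im then 1 else 0)]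
    simp
  have hpos : #{k | 0 < conjWeight (α k)} = #{k | (α k).im = 0} + #{k | 0 < (α k).im} := by
    rw [← card_union_of_disjoint (disjoint_filter.mpr fun k _ h => by simp [h]), ← filter_or]
    congr 1
    refine filter_congr fun k _ => ?_
    unfold conjWeight
    split_ifs <;> grind
  have hneg : #{k | conjWeight (α k) < 0} = #{k | (α k).im < 0} := by
    congr 1
    refine filter_congr fun k _ => ?_
    unfold conjWeight
    split_ifs <;> grind
  omega

end ConjClosed

section RealPolynomial

variable {P : ℝ[X]}

theorem conj_mem_aroots {z : ℂ} (hz : z ∈ P.aroots ℂ) : conj z ∈ P.aroots ℂ := by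
  rw [mem_aroots] at hz ⊢
  rw [← Complex.conjAe_coe, aeval_algHom_apply, hz.2, map_zero]
  exact ⟨hz.1, rfl⟩

theorem ofReal_mem_aroots_iff {r : ℝ} : (r : ℂ) ∈ P.aroots ℂ ↔ r ∈ P.roots := by
  rw [mem_aroots, mem_roots', ← Complex.coe_algebraMap, aeval_algebraMap_apply,
    FaithfulSMul.algebraMap_eq_zero_iff, coe_aeval_eq_eval, IsRoot]

theorem exists_enumeration_aroots {n : ℕ} (hdeg : P.natDegree = n) (hsep : (P.aroots ℂ).Nodup) :
    ∃ α : Fin n → ℂ, Function.Injective α ∧ ∀ z, z ∈ P.aroots ℂ ↔ ∃ k, α k = z := by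
  classical
  have hcard : (P.aroots ℂ).toFinset.card = n := by
    rw [Multiset.toFinset_card_of_nodup hsep, IsAlgClosed.card_aroots_eq_natDegree, hdeg]
  let e := (P.aroots ℂ).toFinset.equivFinOfCardEq hcard
  refine ⟨fun k => e.symm k, fun k l h => e.symm.injective (Subtype.ext h), fun z => ?_⟩
  constructor
  · intro hz
    exact ⟨e ⟨z, Multiset.mem_toFinset.mpr hz⟩, by simp⟩
  · rintro ⟨k, rfl⟩
    exact Multiset.mem_toFinset.mp (e.symm k).2

theorem card_roots_toFinset_eq_card_im_eq_zero {ι : Type*} [Fintype ι] {α : ι → ℂ}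
    (hinj : Function.Injective α) (hα : ∀ z, z ∈ P.aroots ℂ ↔ ∃ k, α k = z) :
    P.roots.toFinset.card = #{k | (α k).im = 0} := by
  classical
  symm
  have hre {k} (hk : (α k).im = 0) : ((α k).re : ℂ) = α k := Complex.ext rfl (by simp [hk])
  refine card_bij (fun k _ => (α k).re) (fun k hk => ?_) (fun k hk l hl h => ?_) fun r hr => ?_
  · rw [mem_filter] at hk
    rw [Multiset.mem_toFinset, ← ofReal_mem_aroots_iff, hre hk.2, hα]
    exact ⟨k, rfl⟩
  · rw [mem_filter] at hk hl
    exact hinj (Complex.ext h (hk.2.trans hl.2.symm))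
  · obtain ⟨k, hk⟩ := (hα r).mp (ofReal_mem_aroots_iff.mpr (Multiset.mem_toFinset.mp hr))
    exact ⟨k, by simp [hk], by simp [hk]⟩

end RealPolynomial

section Hankel

variable {n : ℕ} {P : ℝ[X]} {α : Fin n → ℂ}

noncomputable def conjCoordVandermonde (α : Fin n → ℂ) : Matrix (Fin n) (Fin n) ℝ :=
  of fun k i => conjCoord (α k) (vandermonde α k i)

theorem algebraMap_jacobiHermiteMatrix_apply (hm : P.Monic) (hdeg : P.natDegree = n)
    (hinj : Function.Injective α) (hα : ∀ k, aeval (α k) P = 0) (i j : Fin n) :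
    algebraMap ℝ ℂ (jacobiHermiteMatrix n P i j) = ∑ k, α k ^ (i : ℕ) * α k ^ (j : ℕ) := by
  rw [jacobiHermiteMatrix, of_apply, trace_companionMatrix_pow hm hdeg hinj hα]
  simp only [pow_add]

theorem isUnit_det_jacobiHermiteMatrix (hm : P.Monic) (hdeg : P.natDegree = n)
    (hinj : Function.Injective α) (hα : ∀ k, aeval (α k) P = 0) :
    IsUnit (jacobiHermiteMatrix n P).det := by
  have hV : (jacobiHermiteMatrix n P).map (algebraMap ℝ ℂ) = (vandermonde α)ᵀ * vandermonde α := by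
    ext i j
    rw [map_apply, algebraMap_jacobiHermiteMatrix_apply hm hdeg hinj hα, mul_apply]
    simp
  have hdet : algebraMap ℝ ℂ (jacobiHermiteMatrix n P).det = (vandermonde α).det ^ 2 := by
    rw [RingHom.map_det, RingHom.mapMatrix_apply, hV, det_mul, det_transpose, sq]
  refine isUnit_iff_ne_zero.mpr fun h => ?_
  rw [h, map_zero, eq_comm, pow_eq_zero_iff two_ne_zero] at hdet
  exact det_vandermonde_ne_zero_iff.mpr hinj hdet

theorem jacobiHermiteMatrix_eq_transpose_mul_diagonal_mul (hm : P.Monic) (hdeg : P.natDegree = n)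
    (hinj : Function.Injective α) (hα : ∀ k, aeval (α k) P = 0)
    (hconj : ∀ k, ∃ l, α l = conj (α k)) :
    jacobiHermiteMatrix n P
      = (conjCoordVandermonde α)ᵀ * diagonal (conjWeight ∘ α) * conjCoordVandermonde α := by
  ext i j
  have h := algebraMap_jacobiHermiteMatrix_apply hm hdeg hinj hα i j
  rw [← Complex.ofReal_re (jacobiHermiteMatrix n P i j), ← Complex.coe_algebraMap, h,
    Complex.re_sum, ← sum_conjWeight_mul_conjCoord_pow hinj hconj, mul_apply]
  simp only [mul_diagonal, transpose_apply, conjCoordVandermonde, of_apply, vandermonde_apply,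
    Function.comp_apply]
  exact sum_congr rfl fun k _ => by ring

end Hankel

/-- Jacobi–Hermite theorem: for `P` monic of degree `n` with distinct complex roots, the
number of real roots of `P` equals the signature of the Hankel matrix
`S(P) = (σ_{i+j−2})` of power sums of the roots. -/
theorem jacobi_hermite (n : ℕ) (P : Polynomial ℝ) (hm : P.Monic) (hdeg : P.natDegree = n)
    (hsep : ((P.map (algebraMap ℝ ℂ)).roots).Nodup) :
    (P.roots.toFinset.card : ℤ) = matrixSignature (jacobiHermiteMatrix n P) := by
  obtain ⟨α, hinj, hα⟩ := exists_enumeration_aroots hdeg hsep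
  have hroot (k : Fin n) : aeval (α k) P = 0 := (mem_aroots.mp ((hα _).mpr ⟨k, rfl⟩)).2
  have hconj (k : Fin n) : ∃ l, α l = conj (α k) :=
    (hα _).mp (conj_mem_aroots ((hα _).mpr ⟨k, rfl⟩))
  have hS := jacobiHermiteMatrix_eq_transpose_mul_diagonal_mul hm hdeg hinj hroot hconj
  have hM : IsUnit (conjCoordVandermonde α).det := by
    have h := isUnit_det_jacobiHermiteMatrix hm hdeg hinj hroot
    rw [hS, det_mul, det_mul, det_transpose] at h
    exact isUnit_of_mul_isUnit_right h
  rw [hS, matrixSignature_transpose_mul_diagonal_mul _ hM, Function.comp_def,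
    card_conjWeight_pos_sub_card_conjWeight_neg hinj hconj,
    card_roots_toFinset_eq_card_im_eq_zero hinj hα]
end

section
/- Sublagrangian reduction for signatures: if (V, φ) is a nonsingular symmetric form over ℝ and L ⊆ V is an isotropic subspace (φ vanishes on L × L), then the induced symmetric form on L^⊥/L is nonsingular and has the same signature as (V, φ): τ(L^⊥/L, [φ]) = τ(V, φ). -/
open Matrix

/-- The signature of a (symmetric) bilinear form on a finite-dimensional real vector
space, computed from its Gram matrix in some basis (well defined by Sylvester's law of
inertia). -/
noncomputable def bilinSignature {V : Type} [AddCommGroup V] [Module ℝ V]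
    [FiniteDimensional ℝ V] (B : LinearMap.BilinForm ℝ V) : ℤ :=
  matrixSignature (Matrix.of fun i j : Fin (Module.finrank ℝ V) =>
    B (Module.finBasis ℝ V i) (Module.finBasis ℝ V j))

/-!
Let `p(B)` be the largest dimension of a subspace on which `B` is positive definite, so that
`τ(B) = p(B) - p(-B)`. A `B`-positive subspace `P` meets `L^⊥` in dimension at least
`dim P - dim L`, and `P ∩ L^⊥` maps isometrically (hence injectively) into `L^⊥/L`; thus
`p(B) ≤ p([B]) + dim L`, and likewise `p(-B) ≤ p(-[B]) + dim L`. For a nondegenerate form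
`p + p(-·)` is the dimension, here `dim V` and `dim V - 2 dim L`, so both inequalities are
equalities.
-/

open Module Submodule

namespace LinearMap.BilinForm

variable {V : Type*} [AddCommGroup V] [Module ℝ V] (B : LinearMap.BilinForm ℝ V)

def PosDefOn (U : Submodule ℝ V) : Prop :=
  ∀ x ∈ U, x ≠ 0 → 0 < B x x

variable {B} in
lemma PosDefOn.disjoint_of_nonpos {U N : Submodule ℝ V} (hU : B.PosDefOn U)
    (hN : ∀ x ∈ N, B x x ≤ 0) : Disjoint U N :=
  disjoint_def.mpr fun x hxU hxN => not_not.mp fun hx0 => (hN x hxN).not_gt (hU x hxU hx0)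

section PosIndex

variable [FiniteDimensional ℝ V]

/-- The positive index of inertia of `B`. -/
noncomputable def posIndex : ℕ :=
  sSup {k | ∃ U : Submodule ℝ V, B.PosDefOn U ∧ finrank ℝ U = k}

lemma bddAbove_finrank_posDefOn :
    BddAbove {k | ∃ U : Submodule ℝ V, B.PosDefOn U ∧ finrank ℝ U = k} :=
  ⟨finrank ℝ V, by rintro _ ⟨U, -, rfl⟩; exact U.finrank_le⟩

variable {B} in
lemma PosDefOn.finrank_le_posIndex {U : Submodule ℝ V} (hU : B.PosDefOn U) :
    finrank ℝ U ≤ B.posIndex :=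
  le_csSup B.bddAbove_finrank_posDefOn ⟨U, hU, rfl⟩

lemma exists_posDefOn_finrank_eq_posIndex :
    ∃ U : Submodule ℝ V, B.PosDefOn U ∧ finrank ℝ U = B.posIndex :=
  Nat.sSup_mem (s := {k | ∃ U : Submodule ℝ V, B.PosDefOn U ∧ finrank ℝ U = k})
    ⟨0, ⊥, fun _ hx hx0 => absurd ((mem_bot ℝ).mp hx) hx0, finrank_bot ℝ V⟩
    B.bddAbove_finrank_posDefOn

lemma posIndex_le_of_apply_self_eq {V' : Type*} [AddCommGroup V'] [Module ℝ V']
    [FiniteDimensional ℝ V'] (B' : LinearMap.BilinForm ℝ V') (f : V →ₗ[ℝ] V')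
    (hf : ∀ x, B' (f x) (f x) = B x x) : B.posIndex ≤ B'.posIndex := by
  obtain ⟨U, hU, hUrank⟩ := B.exists_posDefOn_finrank_eq_posIndex
  have hpos : ∀ u : U, u ≠ 0 → 0 < B' (f u) (f u) := fun u hu =>
    (hf u).symm ▸ hU u u.2 (by simpa using hu)
  have hinj : Function.Injective (f ∘ₗ U.subtype) := by
    refine (injective_iff_map_eq_zero _).mpr fun u hu => not_not.mp fun hu0 => ?_
    have hfu : f u = 0 := hu
    simpa [hfu] using hpos u hu0
  have hrange : B'.PosDefOn (range (f ∘ₗ U.subtype)) := by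
    rintro _ ⟨u, rfl⟩ hu0
    exact hpos u (by rintro rfl; simp at hu0)
  rw [← hUrank, ← finrank_range_of_inj hinj]
  exact hrange.finrank_le_posIndex

lemma posIndex_le_posIndex_restrict_add (W : Submodule ℝ V) :
    B.posIndex ≤ (B.restrict W).posIndex + (finrank ℝ V - finrank ℝ W) := by
  obtain ⟨P, hP, hPrank⟩ := B.exists_posDefOn_finrank_eq_posIndex
  have hPW : (B.restrict W).PosDefOn (P.comap W.subtype) := fun x hx hx0 =>
    hP x hx (by simpa using hx0)
  have hrank : finrank ℝ (P.comap W.subtype) = finrank ℝ ↥(P ⊓ W) := by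
    rw [← finrank_map_subtype_eq, map_comap_subtype, inf_comm]
  have hdim := finrank_sup_add_finrank_inf_eq P W
  have hsup := (P ⊔ W).finrank_le
  have := hPW.finrank_le_posIndex
  omega

lemma posIndex_le_posIndex_quotient_add {W : Submodule ℝ V} {K : Submodule ℝ W}
    (C : LinearMap.BilinForm ℝ (W ⧸ K)) (hC : ∀ x : W, C (K.mkQ x) (K.mkQ x) = B x x) :
    B.posIndex ≤ C.posIndex + (finrank ℝ V - finrank ℝ W) :=
  (B.posIndex_le_posIndex_restrict_add W).trans
    (Nat.add_le_add_right ((B.restrict W).posIndex_le_of_apply_self_eq C K.mkQ hC) _)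

end PosIndex

lemma finrank_span_basis_image {ι : Type*} (c : Basis ι ℝ V) (s : Finset ι) :
    finrank ℝ (span ℝ (c '' s)) = s.card := by
  rw [Set.image_eq_range]
  exact (finrank_span_eq_card (c.linearIndependent.comp _ Subtype.val_injective)).trans
    (Fintype.card_coe s)

section OrthogonalBasis

variable {ι : Type*} [Fintype ι] {B} {c : Basis ι ℝ V}

lemma iIsOrtho.apply_self_eq_sum (hc : B.iIsOrtho c) (x : V) :
    B x x = ∑ i, c.repr x i ^ 2 * B (c i) (c i) := by
  classical
  conv_lhs => rw [← c.sum_repr x]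
  simp only [sum_left, sum_right, smul_left, smul_right]
  refine Finset.sum_congr rfl fun i _ => ?_
  rw [Finset.sum_eq_single i (fun j _ hji => by rw [hc hji, mul_zero]) (by simp)]
  ring

lemma iIsOrtho.posDefOn_span_image (hc : B.iIsOrtho c) {s : Set ι}
    (hs : ∀ i ∈ s, 0 < B (c i) (c i)) : B.PosDefOn (span ℝ (c '' s)) := by
  intro x hx hx0
  have hsupp := c.mem_span_image.mp hx
  obtain ⟨i, hi⟩ : ∃ i, c.repr x i ≠ 0 := by
    by_contra! h
    exact hx0 (c.repr.injective (Finsupp.ext (by simpa using h)))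
  rw [hc.apply_self_eq_sum]
  refine Finset.sum_pos' (fun j _ => ?_) ⟨i, Finset.mem_univ _, ?_⟩
  · by_cases hj : c.repr x j = 0
    · simp [hj]
    · exact mul_nonneg (sq_nonneg _) (hs j (hsupp (Finsupp.mem_support_iff.mpr hj))).le
  · exact mul_pos (by positivity) (hs i (hsupp (Finsupp.mem_support_iff.mpr hi)))

lemma iIsOrtho.apply_self_nonpos_of_mem_span_image (hc : B.iIsOrtho c) {s : Set ι}
    (hs : ∀ i ∈ s, B (c i) (c i) ≤ 0) {x : V} (hx : x ∈ span ℝ (c '' s)) :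
    B x x ≤ 0 := by
  have hsupp := c.mem_span_image.mp hx
  rw [hc.apply_self_eq_sum]
  refine Finset.sum_nonpos fun j _ => ?_
  by_cases hj : c.repr x j = 0
  · simp [hj]
  · exact mul_nonpos_of_nonneg_of_nonpos (sq_nonneg _)
      (hs j (hsupp (Finsupp.mem_support_iff.mpr hj)))

variable [FiniteDimensional ℝ V]

lemma iIsOrtho.posIndex_eq_card (hc : B.iIsOrtho c) :
    B.posIndex = (Finset.univ.filter fun i => 0 < B (c i) (c i)).card := by
  set s := Finset.univ.filter fun i => 0 < B (c i) (c i)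
  set t := Finset.univ.filter fun i => ¬ 0 < B (c i) (c i)
  refine le_antisymm ?_ ?_
  · obtain ⟨U, hU, hUrank⟩ := B.exists_posDefOn_finrank_eq_posIndex
    have hdisj := hU.disjoint_of_nonpos fun x hx =>
      hc.apply_self_nonpos_of_mem_span_image (s := t)
        (fun i hi => not_lt.mp (by simpa [t] using hi)) hx
    have hle := finrank_add_finrank_le_of_disjoint hdisj
    rw [finrank_span_basis_image, finrank_eq_card_basis c] at hle
    have hst : s.card + t.card = Fintype.card ι := Finset.card_filter_add_card_filter_not _
    omega
  · rw [← finrank_span_basis_image c s]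
    exact (hc.posDefOn_span_image fun i hi => by simpa [s] using hi).finrank_le_posIndex

lemma iIsOrtho.posIndex_neg_eq_card (hc : B.iIsOrtho c) :
    (-B).posIndex = (Finset.univ.filter fun i => B (c i) (c i) < 0).card := by
  have hc' : (-B).iIsOrtho c := iIsOrtho_def.mpr fun i j hij => by
    rw [neg_apply, iIsOrtho_def.mp hc i j hij, neg_zero]
  simp only [hc'.posIndex_eq_card, neg_apply, Left.neg_pos_iff]

end OrthogonalBasis

lemma exists_iIsOrtho_basis_apply_self_eq_eigenvalues {ι : Type*} [Fintype ι] [DecidableEq ι]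
    (b : Basis ι ℝ V) (hS : (Matrix.of fun i j => B (b i) (b j)).IsHermitian) :
    ∃ c : Basis ι ℝ V, B.iIsOrtho c ∧ ∀ i, B (c i) (c i) = hS.eigenvalues i := by
  set v := hS.eigenvectorBasis
  let c := v.toBasis.map ((WithLp.linearEquiv 2 ℝ (ι → ℝ)).trans b.equivFun.symm)
  have hc : ∀ i j, B (c i) (c j) = hS.eigenvalues j * inner ℝ (v i) (v j) := by
    intro i j
    have hgram : toMatrix b B = Matrix.of fun i j => B (b i) (b j) := by
      ext; simp [toMatrix_apply]
    simp only [c, Basis.map_apply, LinearEquiv.trans_apply, OrthonormalBasis.coe_toBasis,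
      WithLp.coe_linearEquiv]
    rw [← dotProduct_toMatrix_mulVec, hgram, hS.mulVec_eigenvectorBasis, dotProduct_smul,
      smul_eq_mul, EuclideanSpace.inner_eq_star_dotProduct, star_trivial, dotProduct_comm]
  refine ⟨c, iIsOrtho_def.mpr fun i j hij => ?_, fun i => ?_⟩
  · rw [hc, v.orthonormal.inner_eq_zero hij, mul_zero]
  · rw [hc, real_inner_self_eq_norm_sq, v.orthonormal.1 i, one_pow, mul_one]

variable [FiniteDimensional ℝ V]

lemma posIndex_add_posIndex_neg (hsymm : B.IsSymm) (hnd : B.Nondegenerate) :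
    B.posIndex + (-B).posIndex = finrank ℝ V := by
  have := invertibleOfNonzero (two_ne_zero' ℝ)
  obtain ⟨c, hc⟩ : ∃ c : Basis (Fin (finrank ℝ V)) ℝ V, B.iIsOrtho c :=
    exists_orthogonal_basis (isSymm_iff.mp hsymm)
  have hneg : ∀ i, B (c i) (c i) < 0 ↔ ¬ 0 < B (c i) (c i) := fun i =>
    ⟨not_lt_of_gt, fun h =>
      (not_lt.mp h).lt_of_ne (hc.not_isOrtho_basis_self_of_nondegenerate hnd i)⟩
  rw [hc.posIndex_eq_card, hc.posIndex_neg_eq_card, Finset.filter_congr fun i _ => hneg i,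
    Finset.card_filter_add_card_filter_not, Finset.card_univ, Fintype.card_fin]

section Reduction

variable {B} {L : Submodule ℝ V}

lemma finrank_quotient_orthogonal_add_two_mul (hnd : B.Nondegenerate) (hL : L ≤ B.orthogonal L) :
    finrank ℝ (B.orthogonal L ⧸ comap (B.orthogonal L).subtype L) + 2 * finrank ℝ L =
      finrank ℝ V := by
  have hquot := finrank_quotient_add_finrank (comap (B.orthogonal L).subtype L)
  have hcomap := (comapSubtypeEquivOfLe hL).finrank_eq
  have horth := finrank_orthogonal hnd L
  have hle := L.finrank_le
  omega

lemma nondegenerate_quotient_orthogonal (hrefl : B.IsRefl) (hnd : B.Nondegenerate)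
    (C : LinearMap.BilinForm ℝ (B.orthogonal L ⧸ comap (B.orthogonal L).subtype L))
    (hC : ∀ x y : B.orthogonal L,
      C (Submodule.Quotient.mk x) (Submodule.Quotient.mk y) = B x y) :
    C.Nondegenerate := by
  refine .ofSeparatingLeft fun xq hxq => ?_
  obtain ⟨x, rfl⟩ := Submodule.Quotient.mk_surjective _ xq
  have hx : (x : V) ∈ B.orthogonal (B.orthogonal L) := mem_orthogonal_iff.mpr fun y hy =>
    hrefl _ _ ((hC x ⟨y, hy⟩).symm.trans (hxq _))
  rw [orthogonal_orthogonal hnd hrefl] at hx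
  exact (Submodule.Quotient.mk_eq_zero _).mpr hx

end Reduction

end LinearMap.BilinForm

open LinearMap.BilinForm

/-- Sylvester's law of inertia. -/
lemma bilinSignature_eq_posIndex_sub_posIndex_neg {V : Type} [AddCommGroup V] [Module ℝ V]
    [FiniteDimensional ℝ V] {B : LinearMap.BilinForm ℝ V} (hsymm : B.IsSymm) :
    bilinSignature B = B.posIndex - (-B).posIndex := by
  have hS : (Matrix.of fun i j : Fin (finrank ℝ V) =>
      B (finBasis ℝ V i) (finBasis ℝ V j)).IsHermitian := by
    ext i j
    exact hsymm.eq _ _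
  obtain ⟨c, hc, hceig⟩ := B.exists_iIsOrtho_basis_apply_self_eq_eigenvalues _ hS
  simp only [bilinSignature, matrixSignature, dif_pos hS, hc.posIndex_eq_card,
    hc.posIndex_neg_eq_card, hceig]

/-- Sublagrangian reduction: if `(V, B)` is a nondegenerate symmetric form over `ℝ` and
`L` is an isotropic subspace, then the form induced on `L^⊥/L` is nondegenerate and has
the same signature as `B`. -/
theorem sublagrangian_reduction (V : Type) [AddCommGroup V] [Module ℝ V]
    [FiniteDimensional ℝ V] (B : LinearMap.BilinForm ℝ V)
    (hsymm : B.IsSymm) (hnd : B.Nondegenerate)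
    (L : Submodule ℝ V) (hiso : ∀ x ∈ L, ∀ y ∈ L, B x y = 0)
    (C : LinearMap.BilinForm ℝ
      (↥(B.orthogonal L) ⧸ Submodule.comap (B.orthogonal L).subtype L))
    (hC : ∀ x y : ↥(B.orthogonal L),
      C (Submodule.Quotient.mk x) (Submodule.Quotient.mk y) = B (x : V) (y : V)) :
    C.Nondegenerate ∧ bilinSignature C = bilinSignature B := by
  have hL : L ≤ B.orthogonal L := fun x hx => mem_orthogonal_iff.mpr fun y hy => hiso y hy x hx
  have hCsymm : C.IsSymm := isSymm_def.mpr fun xq yq => by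
    obtain ⟨x, rfl⟩ := Submodule.Quotient.mk_surjective _ xq
    obtain ⟨y, rfl⟩ := Submodule.Quotient.mk_surjective _ yq
    rw [hC, hC, hsymm.eq]
  have hCnd := nondegenerate_quotient_orthogonal hsymm.isRefl hnd C hC
  have hpos := B.posIndex_le_posIndex_quotient_add C fun x => hC x x
  have hneg := (-B).posIndex_le_posIndex_quotient_add (-C) fun x => by simp [hC]
  have hsumB := B.posIndex_add_posIndex_neg hsymm hnd
  have hsumC := C.posIndex_add_posIndex_neg hCsymm hCnd
  have hdimQ := finrank_quotient_orthogonal_add_two_mul hnd hL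
  have hdimW := finrank_orthogonal hnd L
  refine ⟨hCnd, ?_⟩
  rw [bilinSignature_eq_posIndex_sub_posIndex_neg hsymm,
    bilinSignature_eq_posIndex_sub_posIndex_neg hCsymm]
  omega
end

section
/- Novikov additivity of the signature (algebraic form): let (V, φ) be a nonsingular symmetric form over ℝ which is a union of subforms (V_1, φ_1) and (V_2, φ_2) with V_1^⊥ = V_2 (special union). Then τ(V, φ) = τ(V_1, φ_1) + τ(V_2, φ_2). -/
/-!
Let `p, q` be the positive and negative indices of `B` (largest dimensions of definite subspaces),
`pᵢ, qᵢ` those of its restriction to `Vᵢ`, and `R = V₁ ⊓ V₂`, the radical of both restrictions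
(as `V₂ = V₁ᗮ` and `V₁ = V₂ᗮ`). Then `p + q = dim V`, `pᵢ + qᵢ + dim R = dim Vᵢ` and
`dim V₁ + dim V₂ = dim V`. Maximal negative definite subspaces of `V₁` and of `V₂`, together
with `R`, are mutually orthogonal and span a negative semidefinite subspace of dimension
`q₁ + q₂ + dim R`, which meets every positive definite subspace trivially; so
`p + q₁ + q₂ + dim R ≤ dim V`, and likewise `q + p₁ + p₂ + dim R ≤ dim V`. The three equalities
force both inequalities to be equalities, whose difference is `p - q = p₁ - q₁ + p₂ - q₂`.
By Sylvester's law of inertia `p - q` is also the eigenvalue count defining `bilinSignature`.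
-/

open Matrix

open Module QuadraticMap QuadraticForm

namespace Submodule

variable {K V : Type*} [DivisionRing K] [AddCommGroup V] [Module K V] [FiniteDimensional K V]

lemma finrank_sup_of_disjoint {X Y : Submodule K V} (h : Disjoint X Y) :
    finrank K ↥(X ⊔ Y) = finrank K X + finrank K Y := by
  rw [← finrank_sup_add_finrank_inf_eq, h.eq_bot, finrank_bot, add_zero]

end Submodule

namespace LinearMap.BilinForm

variable {𝕜 V : Type*} [Field 𝕜] [AddCommGroup V] [Module 𝕜 V] {B : LinearMap.BilinForm 𝕜 V}

lemma ker_restrict (hB : B.IsSymm) (W : Submodule 𝕜 V) :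
    LinearMap.ker (B.restrict W) = (B.orthogonal W).comap W.subtype := by
  ext x
  simp [LinearMap.ext_iff, mem_orthogonal_iff, hB.eq _ (x : V)]

lemma restrict_neg (W : Submodule 𝕜 V) : (-B).restrict W = -B.restrict W :=
  rfl

lemma equivalent_weightedSumSquares_of_isOrthoᵢ [Invertible (2 : 𝕜)] {ι : Type*} [Fintype ι]
    {v : Basis ι 𝕜 V} (hv : B.IsOrthoᵢ v) :
    B.toQuadraticMap.Equivalent (weightedSumSquares 𝕜 fun i => B (v i) (v i)) := by
  have : B.toQuadraticMap.basisRepr v = weightedSumSquares 𝕜 fun i => B (v i) (v i) := by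
    refine basisRepr_eq_of_iIsOrtho _ _ fun i j hij => ?_
    have h₁ : B (v i) (v j) = 0 := hv hij
    have h₂ : B (v j) (v i) = 0 := hv hij.symm
    simp [Function.onFun, associated_toQuadraticMap, h₁, h₂]
  exact this ▸ ⟨isometryEquivBasisRepr _ v⟩

variable [LinearOrder 𝕜]

lemma disjoint_of_apply_self_neg {X Y : Submodule 𝕜 V} (hXY : ∀ x ∈ X, ∀ y ∈ Y, B x y = 0)
    (hX : ∀ x ∈ X, x ≠ 0 → B x x < 0) : Disjoint X Y := by
  refine Submodule.disjoint_def.mpr fun x hx hy => ?_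
  by_contra h
  exact (hX x hx h).ne (hXY x hx x hy)

variable [IsStrictOrderedRing 𝕜]

lemma apply_self_nonpos_of_mem_sup (hB : B.IsSymm) {X Y : Submodule 𝕜 V}
    (hXY : ∀ x ∈ X, ∀ y ∈ Y, B x y = 0) (hX : ∀ x ∈ X, B x x ≤ 0) (hY : ∀ y ∈ Y, B y y ≤ 0) :
    ∀ z ∈ X ⊔ Y, B z z ≤ 0 := by
  intro z hz
  obtain ⟨x, hx, y, hy, rfl⟩ := Submodule.mem_sup.mp hz
  have hyx : B y x = 0 := by rw [hB.eq]; exact hXY x hx y hy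
  simp only [map_add, LinearMap.add_apply, hXY x hx y hy, hyx]
  linarith [hX x hx, hY y hy]

lemma sigPos_toQuadraticMap_eq_card {ι : Type*} [Fintype ι] {v : Basis ι 𝕜 V}
    (hv : B.IsOrthoᵢ v) :
    sigPos B.toQuadraticMap = (Finset.univ.filter fun i => 0 < B (v i) (v i)).card := by
  classical
  let : Invertible (2 : 𝕜) := invertibleOfNonzero two_ne_zero
  rw [sigPos_of_equiv_weightedSumSquares (equivalent_weightedSumSquares_of_isOrthoᵢ hv),
    Set.ncard_eq_toFinset_card', Set.toFinset_ofPred]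

lemma sigNeg_toQuadraticMap_eq_card {ι : Type*} [Fintype ι] {v : Basis ι 𝕜 V}
    (hv : B.IsOrthoᵢ v) :
    sigNeg B.toQuadraticMap = (Finset.univ.filter fun i => B (v i) (v i) < 0).card := by
  classical
  let : Invertible (2 : 𝕜) := invertibleOfNonzero two_ne_zero
  rw [sigNeg_of_equiv_weightedSumSquares (equivalent_weightedSumSquares_of_isOrthoᵢ hv),
    Set.ncard_eq_toFinset_card', Set.toFinset_ofPred]

variable [FiniteDimensional 𝕜 V]

lemma sigPos_add_sigNeg_add_finrank_ker (hB : B.IsSymm) :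
    sigPos B.toQuadraticMap + sigNeg B.toQuadraticMap + finrank 𝕜 (LinearMap.ker B) =
      finrank 𝕜 V := by
  let : Invertible (2 : 𝕜) := invertibleOfNonzero two_ne_zero
  have hrad : B.toQuadraticMap.radical = LinearMap.ker B := by
    rw [radical_eq_ker_associated, associated_left_inverse 𝕜 hB.eq]
  rw [← hrad, sigPos_add_sigNeg_add_radical]

lemma sigPos_add_sigNeg_add_finrank_inf_orthogonal (hB : B.IsSymm) (W : Submodule 𝕜 V) :
    sigPos (B.restrict W).toQuadraticMap + sigNeg (B.restrict W).toQuadraticMap +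
      finrank 𝕜 ↥(W ⊓ B.orthogonal W) = finrank 𝕜 W := by
  rw [← sigPos_add_sigNeg_add_finrank_ker (hB.restrict W), ker_restrict hB,
    ← Submodule.map_comap_subtype, Submodule.finrank_map_subtype_eq]

lemma exists_le_finrank_eq_sigNeg_restrict (W : Submodule 𝕜 V) :
    ∃ N ≤ W, finrank 𝕜 N = sigNeg (B.restrict W).toQuadraticMap ∧
      ∀ x ∈ N, x ≠ 0 → B x x < 0 := by
  obtain ⟨N, hN, hneg⟩ := exists_finrank_eq_sigNeg_and_negDef (B.restrict W).toQuadraticMap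
  refine ⟨N.map W.subtype, Submodule.map_subtype_le _ _,
    by rw [Submodule.finrank_map_subtype_eq, hN], ?_⟩
  rintro _ ⟨x, hx, rfl⟩ hx0
  simpa using hneg ⟨x, hx⟩ (by simpa using hx0)

lemma sigPos_add_sigNeg_restrict_add_sigNeg_restrict_le (hB : B.IsSymm)
    {W₁ W₂ : Submodule 𝕜 V} (h : ∀ x ∈ W₁, ∀ y ∈ W₂, B x y = 0) :
    sigPos B.toQuadraticMap + sigNeg (B.restrict W₁).toQuadraticMap +
      sigNeg (B.restrict W₂).toQuadraticMap + finrank 𝕜 ↥(W₁ ⊓ W₂) ≤ finrank 𝕜 V := by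
  obtain ⟨N₁, hN₁W, hN₁, hneg₁⟩ := exists_le_finrank_eq_sigNeg_restrict (B := B) W₁
  obtain ⟨N₂, hN₂W, hN₂, hneg₂⟩ := exists_le_finrank_eq_sigNeg_restrict (B := B) W₂
  have nonpos_of_neg : ∀ N : Submodule 𝕜 V, (∀ x ∈ N, x ≠ 0 → B x x < 0) →
      ∀ x ∈ N, B x x ≤ 0 := fun N hN x hx => by
    rcases eq_or_ne x 0 with rfl | hx0
    · simp
    · exact (hN x hx hx0).le
  have hN₂R : ∀ x ∈ N₂, ∀ y ∈ W₁ ⊓ W₂, B x y = 0 := fun x hx y hy => by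
    rw [hB.eq]; exact h y hy.1 x (hN₂W hx)
  have hN₁N₂R : ∀ x ∈ N₁, ∀ y ∈ N₂ ⊔ W₁ ⊓ W₂, B x y = 0 := fun x hx y hy =>
    h x (hN₁W hx) y (sup_le hN₂W inf_le_right hy)
  have hnonpos : ∀ z ∈ N₁ ⊔ (N₂ ⊔ W₁ ⊓ W₂), B z z ≤ 0 :=
    apply_self_nonpos_of_mem_sup hB hN₁N₂R (nonpos_of_neg N₁ hneg₁)
      (apply_self_nonpos_of_mem_sup hB hN₂R (nonpos_of_neg N₂ hneg₂)
        fun x hx => (h x hx.1 x hx.2).le)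
  have hdim := sigPos_add_finrank_le_of_nonpos (Q := B.toQuadraticMap) hnonpos
  rw [Submodule.finrank_sup_of_disjoint (disjoint_of_apply_self_neg hN₁N₂R hneg₁),
    Submodule.finrank_sup_of_disjoint (disjoint_of_apply_self_neg hN₂R hneg₂), hN₁, hN₂] at hdim
  omega

lemma sigNeg_add_sigPos_restrict_add_sigPos_restrict_le (hB : B.IsSymm)
    {W₁ W₂ : Submodule 𝕜 V} (h : ∀ x ∈ W₁, ∀ y ∈ W₂, B x y = 0) :
    sigNeg B.toQuadraticMap + sigPos (B.restrict W₁).toQuadraticMap +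
      sigPos (B.restrict W₂).toQuadraticMap + finrank 𝕜 ↥(W₁ ⊓ W₂) ≤ finrank 𝕜 V := by
  simpa [restrict_neg] using
    sigPos_add_sigNeg_restrict_add_sigNeg_restrict_le hB.neg (B := -B) (by simpa using h)

end LinearMap.BilinForm

namespace Matrix.IsHermitian

variable {n : Type} [Fintype n] [DecidableEq n] {S : Matrix n n ℝ}

lemma toLinearMap₂'_eigenvectorBasis (hS : S.IsHermitian) (i j : n) :
    toLinearMap₂' ℝ S (hS.eigenvectorBasis i) (hS.eigenvectorBasis j) =
      if i = j then hS.eigenvalues i else 0 := by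
  have horth := orthonormal_iff_ite.mp hS.eigenvectorBasis.orthonormal j i
  rw [EuclideanSpace.inner_eq_star_dotProduct, star_trivial] at horth
  rw [toLinearMap₂'_apply', mulVec_eigenvectorBasis, dotProduct_smul, horth]
  rcases eq_or_ne i j with rfl | h
  · simp
  · simp [h, h.symm]

lemma matrixSignature_eq (hS : S.IsHermitian) :
    matrixSignature S = sigPos (LinearMap.BilinMap.toQuadraticMap (toLinearMap₂' ℝ S))
      - sigNeg (LinearMap.BilinMap.toQuadraticMap (toLinearMap₂' ℝ S)) := by
  set v : Basis n ℝ (n → ℝ) :=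
    hS.eigenvectorBasis.toBasis.map (WithLp.linearEquiv 2 ℝ (n → ℝ))
  have hv : ∀ i j, toLinearMap₂' ℝ S (v i) (v j) = if i = j then hS.eigenvalues i else 0 := by
    simpa [v] using hS.toLinearMap₂'_eigenvectorBasis
  have hvo : (toLinearMap₂' ℝ S).IsOrthoᵢ v := fun i j hij => by
    simp [Function.onFun, hv, hij]
  rw [LinearMap.BilinForm.sigPos_toQuadraticMap_eq_card hvo,
    LinearMap.BilinForm.sigNeg_toQuadraticMap_eq_card hvo, matrixSignature, dif_pos hS]
  simp [hv]

end Matrix.IsHermitian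

namespace LinearMap.BilinForm

variable {V : Type} [AddCommGroup V] [Module ℝ V] [FiniteDimensional ℝ V]
  {B : LinearMap.BilinForm ℝ V}

lemma bilinSignature_eq_sigPos_sub_sigNeg (hB : B.IsSymm) :
    bilinSignature B = sigPos B.toQuadraticMap - sigNeg B.toQuadraticMap := by
  set b := Module.finBasis ℝ V
  set B' : LinearMap.BilinForm ℝ (Fin (finrank ℝ V) → ℝ) :=
    B.compl₁₂ b.equivFun.symm.toLinearMap b.equivFun.symm.toLinearMap
  have hgram : (Matrix.of fun i j => B (b i) (b j)) = toMatrix₂' ℝ B' := by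
    ext i j
    simp [B']
  have hS : (toMatrix₂' ℝ B').IsHermitian := by
    refine Matrix.IsHermitian.ext fun i j => ?_
    simp [B', toMatrix₂'_apply, hB.eq (b j)]
  have hQ : B.toQuadraticMap.Equivalent
      (LinearMap.BilinMap.toQuadraticMap (toLinearMap₂' ℝ (toMatrix₂' ℝ B'))) := by
    rw [Matrix.toLinearMap₂'_toMatrix']
    exact ⟨QuadraticMap.isometryEquivOfCompLinearEquiv _ b.equivFun.symm⟩
  rw [bilinSignature, hgram, hS.matrixSignature_eq, hQ.sigPos_eq, hQ.sigNeg_eq]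

theorem bilinSignature_eq_add_orthogonal (hB : B.IsSymm) (hnd : B.Nondegenerate)
    (W : Submodule ℝ V) :
    bilinSignature B =
      bilinSignature (B.restrict W) + bilinSignature (B.restrict (B.orthogonal W)) := by
  have hV := sigPos_add_sigNeg_add_finrank_ker hB
  have hW := sigPos_add_sigNeg_add_finrank_inf_orthogonal hB W
  have hWperp := sigPos_add_sigNeg_add_finrank_inf_orthogonal hB (B.orthogonal W)
  have hdim := finrank_add_finrank_orthogonal' (B := B) W
  rw [hnd.ker_eq_bot, finrank_bot] at hV
  rw [orthogonal_orthogonal hnd hB.isRefl, inf_comm] at hWperp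
  rw [hnd.ker_eq_bot, inf_bot_eq, finrank_bot] at hdim
  have horth : ∀ x ∈ W, ∀ y ∈ B.orthogonal W, B x y = 0 := fun x hx y hy =>
    mem_orthogonal_iff.mp hy x hx
  have hpos := sigPos_add_sigNeg_restrict_add_sigNeg_restrict_le hB horth
  have hneg := sigNeg_add_sigPos_restrict_add_sigPos_restrict_le hB horth
  rw [bilinSignature_eq_sigPos_sub_sigNeg hB, bilinSignature_eq_sigPos_sub_sigNeg (hB.restrict _),
    bilinSignature_eq_sigPos_sub_sigNeg (hB.restrict _)]
  omega

end LinearMap.BilinForm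

theorem novikov_additivity_general (V : Type) [AddCommGroup V] [Module ℝ V]
    [FiniteDimensional ℝ V] (B : LinearMap.BilinForm ℝ V)
    (hsymm : B.IsSymm) (hnd : B.Nondegenerate)
    (V₁ V₂ : Submodule ℝ V)
    (hperp : B.orthogonal V₁ = V₂) :
    bilinSignature B = bilinSignature (B.restrict V₁) + bilinSignature (B.restrict V₂) :=
  hperp ▸ LinearMap.BilinForm.bilinSignature_eq_add_orthogonal hsymm hnd V₁

/-- Novikov additivity of the signature (algebraic form): if a nonsingular symmetric form
`(V, B)` over `ℝ` is a special union of subforms on `V₁` and `V₂` (i.e. `B(V₁, V₂) = 0`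
and `V₁^⊥ = V₂`), then `τ(V,B) = τ(V₁,B|) + τ(V₂,B|)`. -/
theorem novikov_additivity (V : Type) [AddCommGroup V] [Module ℝ V]
    [FiniteDimensional ℝ V] (B : LinearMap.BilinForm ℝ V)
    (hsymm : B.IsSymm) (hnd : B.Nondegenerate)
    (V₁ V₂ : Submodule ℝ V)
    (horth : ∀ x ∈ V₁, ∀ y ∈ V₂, B x y = 0)
    (hperp : B.orthogonal V₁ = V₂) :
    bilinSignature B = bilinSignature (B.restrict V₁) + bilinSignature (B.restrict V₂) :=
  novikov_additivity_general V B hsymm hnd V₁ V₂ hperp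
end
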